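/- arXiv:2308.10140 — 13 statements merged into one kernel-verified Lean document; each statement's English description precedes it below -/
import Mathlib

section
/- Suppose each f_i is twice continuously differentiable and μ-strongly convex for some μ > 0. Then for every x ∈ ℝⁿ the subproblem function φ_x has a unique minimizer d(x) over ℝⁿ, and d(x) = 0 if and only if x is a Pareto critical point of min F. -/
open Filter Topology MeasureTheory
open scoped RealInnerProductSpace

section Aux

variable {E : Type*} [NormedAddCommGroup E] [NormedSpace ℝ E]

lemma aux_line_convex (g : E → ℝ) (hg : ConvexOn ℝ Set.univ g) (x d : E) :
    ConvexOn ℝ Set.univ (fun t : ℝ => g (x + t • d)) := by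
  refine ⟨convex_univ, ?_⟩
  intro s _ t _ a b ha hb hab
  have h1 : x + (a * s + b * t) • d = a • (x + s • d) + b • (x + t • d) := by
    rw [show (a:ℝ) = 1 - b from by linarith]
    module
  have h2 := hg.2 (Set.mem_univ (x + s • d)) (Set.mem_univ (x + t • d)) ha hb hab
  simp only [smul_eq_mul] at h2 ⊢
  rw [h1]
  exact h2

lemma aux_dir (g : E → ℝ) (hg : ConvexOn ℝ Set.univ g) (x d : E) :
    ∃ L : ℝ, (∀ t : ℝ, 0 < t → L ≤ (g (x + t • d) - g x) / t) ∧
      Filter.Tendsto (fun t : ℝ => (g (x + t • d) - g x) / t) (𝓝[>] (0:ℝ)) (𝓝 L) := by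
  have hconv := aux_line_convex g hg x d
  set h : ℝ → ℝ := fun t => g (x + t • d) with hh
  have h0 : h 0 = g x := by simp [hh]
  have hS : ∀ t : ℝ, (g (x + t • d) - g x) / t = (h t - h 0) / (t - 0) := by
    intro t; rw [h0, sub_zero]
  have mono : MonotoneOn (fun t : ℝ => (g (x + t • d) - g x) / t) (Set.Ioi (0:ℝ)) := by
    intro s hs t ht hst
    show (g (x + s • d) - g x) / s ≤ (g (x + t • d) - g x) / t
    rw [hS s, hS t]
    exact hconv.secant_mono (Set.mem_univ _) (Set.mem_univ _) (Set.mem_univ _)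
      (ne_of_gt hs) (ne_of_gt ht) hst
  have hbdd : ∀ t : ℝ, 0 < t → h 0 - h (-1) ≤ (g (x + t • d) - g x) / t := by
    intro t ht
    have := hconv.secant_mono (a := 0) (x := -1) (y := t) (Set.mem_univ _) (Set.mem_univ _)
      (Set.mem_univ _) (by norm_num) (ne_of_gt ht) (by linarith)
    rw [hS t]
    have e1 : (h (-1) - h 0) / (-1 - 0 : ℝ) = h 0 - h (-1) := by
      rw [show (-1 - 0 : ℝ) = -1 by norm_num, div_neg, div_one]
      ring
    linarith [e1 ▸ this]
  have hbddB : BddBelow ((fun t : ℝ => (g (x + t • d) - g x) / t) '' Set.Ioi 0) := by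
    refine ⟨h 0 - h (-1), ?_⟩
    rintro y ⟨t, ht, rfl⟩
    exact hbdd t ht
  refine ⟨sInf ((fun t : ℝ => (g (x + t • d) - g x) / t) '' Set.Ioi 0), ?_, ?_⟩
  · intro t ht
    exact csInf_le hbddB (Set.mem_image_of_mem _ ht)
  · exact MonotoneOn.tendsto_nhdsGT mono hbddB

lemma aux_quad {E' : Type*} [NormedAddCommGroup E'] [InnerProductSpace ℝ E']
    (A : E' →L[ℝ] E') (a b : E') (t : ℝ) :
    ⟪t • a + (1 - t) • b, A (t • a + (1 - t) • b)⟫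
      = t * ⟪a, A a⟫ + (1 - t) * ⟪b, A b⟫ - (t * (1 - t)) * ⟪a - b, A (a - b)⟫ := by
  rw [sub_eq_add_neg a b, ← neg_one_smul ℝ b]
  rw [map_add, map_add, _root_.map_smul, _root_.map_smul, _root_.map_smul]
  simp only [inner_add_left, inner_add_right, real_inner_smul_left, real_inner_smul_right]
  ring

lemma aux_lin {E' : Type*} [NormedAddCommGroup E'] [InnerProductSpace ℝ E']
    (v a b : E') (t : ℝ) :
    ⟪v, t • a + (1 - t) • b⟫ = t * ⟪v, a⟫ + (1 - t) * ⟪v, b⟫ := by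
  rw [inner_add_right, real_inner_smul_right, real_inner_smul_right]

end Aux

set_option maxHeartbeats 2000000 in
theorem subproblem_unique_minimizer_and_criticality
    {n m : ℕ} (hn : 0 < n) (hm : 0 < m) {μ : ℝ} (hμ : 0 < μ)
    (f g F : Fin m → EuclideanSpace ℝ (Fin n) → ℝ)
    (f' : Fin m → EuclideanSpace ℝ (Fin n) → EuclideanSpace ℝ (Fin n))
    (f'' : Fin m → EuclideanSpace ℝ (Fin n) → (EuclideanSpace ℝ (Fin n) →L[ℝ] EuclideanSpace ℝ (Fin n)))
    (hgrad : ∀ i x, HasGradientAt (f i) (f' i x) x)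
    (hhess : ∀ i x, HasFDerivAt (f' i) (f'' i x) x)
    (hcont : ∀ i, Continuous (f'' i))
    (hg : ∀ i, ConvexOn ℝ Set.univ (g i))
    (hF : ∀ i x, F i x = f i x + g i x)
    (hsc : ∀ i x u, μ * ‖u‖ ^ 2 ≤ ⟪u, f'' i x u⟫)
    (φ : EuclideanSpace ℝ (Fin n) → EuclideanSpace ℝ (Fin n) → ℝ)
    (hφ : ∀ y e, φ y e = Finset.univ.sup' ⟨⟨0, hm⟩, Finset.mem_univ _⟩ fun i =>
      ⟪f' i y, e⟫ + g i (y + e) - g i y + (1/2) * ⟪e, f'' i y e⟫)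
    :
    ∀ x : EuclideanSpace ℝ (Fin n),
      (∃! dx : EuclideanSpace ℝ (Fin n), ∀ e : EuclideanSpace ℝ (Fin n), φ x dx ≤ φ x e) ∧
      ∀ dx : EuclideanSpace ℝ (Fin n), (∀ e : EuclideanSpace ℝ (Fin n), φ x dx ≤ φ x e) →
        (dx = 0 ↔ ∀ d : EuclideanSpace ℝ (Fin n), ∃ i : Fin m, ∃ L : ℝ, 0 ≤ L ∧
      Tendsto (fun t : ℝ => (F i (x + t • d) - F i x) / t) (𝓝[>] (0:ℝ)) (𝓝 L)) := by
  classical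
  intro x
  have hgc : ∀ i, Continuous (g i) := by
    intro i
    rw [← continuousOn_univ]
    exact (hg i).continuousOn isOpen_univ
  -- φ x vanishes at 0
  have hφ0 : φ x 0 = 0 := by
    rw [hφ]
    have : (fun i : Fin m => ⟪f' i x, (0:EuclideanSpace ℝ (Fin n))⟫ + g i (x + 0) - g i x
        + (1/2) * ⟪(0:EuclideanSpace ℝ (Fin n)), f'' i x 0⟫) = fun _ => (0:ℝ) := by
      funext i; simp
    rw [this]; exact Finset.sup'_const _ _
  -- each component is below φ x
  have hle : ∀ (i : Fin m) (e : EuclideanSpace ℝ (Fin n)),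
      ⟪f' i x, e⟫ + g i (x + e) - g i x + (1/2) * ⟪e, f'' i x e⟫ ≤ φ x e := by
    intro i e
    rw [hφ]
    exact Finset.le_sup' (fun j : Fin m =>
      ⟪f' j x, e⟫ + g j (x + e) - g j x + (1/2) * ⟪e, f'' j x e⟫) (Finset.mem_univ i)
  -- strong convexity inequality
  have key : ∀ a b : EuclideanSpace ℝ (Fin n), ∀ t : ℝ, 0 ≤ t → t ≤ 1 →
      φ x (t • a + (1 - t) • b) ≤ t * φ x a + (1 - t) * φ x b
        - μ/2 * (t * (1 - t)) * ‖a - b‖^2 := by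
    intro a b t ht0 ht1
    rw [hφ]
    apply Finset.sup'_le
    intro i _
    have hnn : (0:ℝ) ≤ t * (1 - t) := mul_nonneg ht0 (by linarith)
    have hgpart : g i (x + (t • a + (1 - t) • b)) ≤ t * g i (x + a) + (1 - t) * g i (x + b) := by
      have h1 : x + (t • a + (1 - t) • b) = t • (x + a) + (1 - t) • (x + b) := by
        rw [smul_add, smul_add]
        rw [show t • x + t • a + ((1 - t) • x + (1 - t) • b) =
          (t • x + (1 - t) • x) + (t • a + (1 - t) • b) by abel]
        rw [← add_smul]
        norm_num
      rw [h1]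
      simpa [smul_eq_mul] using
        (hg i).2 (Set.mem_univ (x + a)) (Set.mem_univ (x + b)) ht0 (by linarith) (by ring)
    have hlin : ⟪f' i x, t • a + (1 - t) • b⟫ = t * ⟪f' i x, a⟫ + (1 - t) * ⟪f' i x, b⟫ :=
      aux_lin _ a b t
    have hquad : ⟪t • a + (1 - t) • b, f'' i x (t • a + (1 - t) • b)⟫
        = t * ⟪a, f'' i x a⟫ + (1 - t) * ⟪b, f'' i x b⟫
          - (t * (1 - t)) * ⟪a - b, f'' i x (a - b)⟫ :=
      aux_quad (f'' i x) a b t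
    have hsc' := mul_le_mul_of_nonneg_left (hsc i x (a - b)) hnn
    have hψa := hle i a
    have hψb := hle i b
    have hta := mul_le_mul_of_nonneg_left hψa ht0
    have htb := mul_le_mul_of_nonneg_left hψb (by linarith : (0:ℝ) ≤ 1 - t)
    rw [hlin, hquad]
    nlinarith [hgpart, hsc', hta, htb]
  -- continuity of φ x
  have hcφ : Continuous (φ x) := by
    have h1 : Continuous (fun e : EuclideanSpace ℝ (Fin n) =>
        (Finset.univ : Finset (Fin m)).sup' ⟨⟨0, hm⟩, Finset.mem_univ _⟩ fun i =>
          ⟪f' i x, e⟫ + g i (x + e) - g i x + (1/2) * ⟪e, f'' i x e⟫) := by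
      refine Continuous.finset_sup'_apply (f := fun (i : Fin m)
          (e : EuclideanSpace ℝ (Fin n)) =>
          ⟪f' i x, e⟫ + g i (x + e) - g i x + (1/2) * ⟪e, f'' i x e⟫) _ ?_
      intro i _
      have c1 : Continuous (fun e : EuclideanSpace ℝ (Fin n) => ⟪f' i x, e⟫) :=
        continuous_const.inner continuous_id
      have c2 : Continuous (fun e : EuclideanSpace ℝ (Fin n) => g i (x + e)) :=
        (hgc i).comp (continuous_const.add continuous_id)
      have c3 : Continuous (fun e : EuclideanSpace ℝ (Fin n) => ⟪e, f'' i x e⟫) :=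
        continuous_id.inner (f'' i x).continuous
      exact ((c1.add c2).sub continuous_const).add (continuous_const.mul c3)
    have h2 : (φ x) = fun e => (Finset.univ : Finset (Fin m)).sup'
        ⟨⟨0, hm⟩, Finset.mem_univ _⟩ fun i =>
          ⟪f' i x, e⟫ + g i (x + e) - g i x + (1/2) * ⟪e, f'' i x e⟫ := by
      funext e; exact hφ x e
    rw [h2]; exact h1
  -- convexity of the shifted function
  have hq'conv : ConvexOn ℝ Set.univ (fun e : EuclideanSpace ℝ (Fin n) =>
      φ x e - μ/2 * ‖e‖^2) := by
    refine ⟨convex_univ, ?_⟩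
    intro a _ b _ s t hs ht hst
    have ht' : t = 1 - s := by linarith
    subst ht'
    have hkey := key a b s hs (by linarith)
    have h1 : ‖s • a + (1 - s) • b‖^2
        = s^2 * ‖a‖^2 + 2 * (s * ((1 - s) * ⟪a, b⟫)) + (1 - s)^2 * ‖b‖^2 := by
      rw [norm_add_sq_real, real_inner_smul_left, real_inner_smul_right,
        norm_smul, norm_smul, mul_pow, mul_pow, Real.norm_eq_abs, Real.norm_eq_abs,
        sq_abs, sq_abs]
    have h2 : ‖a - b‖^2 = ‖a‖^2 - 2 * ⟪a, b⟫ + ‖b‖^2 := norm_sub_sq_real a b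
    have h4 : μ/2 * ‖s • a + (1 - s) • b‖^2
        = μ/2 * (s * ‖a‖^2) + μ/2 * ((1 - s) * ‖b‖^2)
          - μ/2 * (s * (1 - s)) * ‖a - b‖^2 := by
      rw [h1, h2]; ring
    simp only [smul_eq_mul]
    linarith [hkey, h4]
  have hq'0 : (fun e : EuclideanSpace ℝ (Fin n) => φ x e - μ/2 * ‖e‖^2) 0 = 0 := by
    simp [hφ0]
  -- lower bound on unit ball
  obtain ⟨M, hMbound⟩ : ∃ M : ℝ, ∀ u : EuclideanSpace ℝ (Fin n), ‖u‖ ≤ 1 →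
      -M ≤ φ x u - μ/2 * ‖u‖^2 := by
    obtain ⟨c, hcmem, hcmin⟩ :=
      (isCompact_closedBall (0:EuclideanSpace ℝ (Fin n)) 1).exists_isMinOn
        ⟨0, Metric.mem_closedBall_self zero_le_one⟩
        ((hcφ.sub (continuous_const.mul (continuous_norm.pow 2))).continuousOn)
    refine ⟨-(φ x c - μ/2 * ‖c‖^2), fun u hu => ?_⟩
    have := hcmin (a := u) (by simpa [Metric.mem_closedBall, dist_zero_right] using hu)
    simpa using this
  -- coercivity
  have coercive : ∀ e : EuclideanSpace ℝ (Fin n), 1 ≤ ‖e‖ →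
      μ/2 * ‖e‖^2 - M * ‖e‖ ≤ φ x e := by
    intro e he
    have hpos : (0:ℝ) < ‖e‖ := lt_of_lt_of_le one_pos he
    have hne : ‖e‖ ≠ 0 := ne_of_gt hpos
    set u : EuclideanSpace ℝ (Fin n) := ‖e‖⁻¹ • e with hu
    have hun : ‖u‖ = 1 := by
      rw [hu, norm_smul, Real.norm_eq_abs, abs_of_nonneg (inv_nonneg.mpr hpos.le),
        inv_mul_cancel₀ hne]
    have hinv0 : (0:ℝ) ≤ ‖e‖⁻¹ := inv_nonneg.mpr hpos.le
    have hinv1 : ‖e‖⁻¹ ≤ 1 := by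
      rw [inv_le_one_iff₀]; right; exact he
    have hcomb : u = ‖e‖⁻¹ • e + (1 - ‖e‖⁻¹) • (0:EuclideanSpace ℝ (Fin n)) := by
      simp [hu]
    have hcvx := hq'conv.2 (Set.mem_univ e) (Set.mem_univ (0:EuclideanSpace ℝ (Fin n)))
      hinv0 (by linarith : (0:ℝ) ≤ 1 - ‖e‖⁻¹) (by ring)
    rw [← hcomb] at hcvx
    simp only [smul_eq_mul, hq'0] at hcvx
    -- hcvx : φ x u - μ/2 * ‖u‖^2 ≤ ‖e‖⁻¹ * (φ x e - μ/2 * ‖e‖^2) + (1 - ‖e‖⁻¹) * 0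
    have hMu := hMbound u (le_of_eq hun)
    have : -M ≤ ‖e‖⁻¹ * (φ x e - μ/2 * ‖e‖^2) := by
      calc -M ≤ φ x u - μ/2 * ‖u‖^2 := hMu
        _ ≤ ‖e‖⁻¹ * (φ x e - μ/2 * ‖e‖^2) + (1 - ‖e‖⁻¹) * 0 := hcvx
        _ = ‖e‖⁻¹ * (φ x e - μ/2 * ‖e‖^2) := by ring
    have hmul := mul_le_mul_of_nonneg_left this hpos.le
    rw [← mul_assoc, mul_inv_cancel₀ hne, one_mul] at hmul
    nlinarith [hmul]
  -- existence of a global minimizer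
  obtain ⟨R, hR1, hRM⟩ : ∃ R : ℝ, (1:ℝ) ≤ R ∧ 2 * M / μ < R :=
    ⟨max 1 (2 * M / μ) + 1, by
      have := le_max_left (1:ℝ) (2 * M / μ); linarith, by
      have := le_max_right (1:ℝ) (2 * M / μ); linarith⟩
  have hRpos : (0:ℝ) < R := lt_of_lt_of_le one_pos hR1
  obtain ⟨d0, hd0mem, hd0min⟩ :=
    (isCompact_closedBall (0:EuclideanSpace ℝ (Fin n)) R).exists_isMinOn
      ⟨0, Metric.mem_closedBall_self hRpos.le⟩ hcφ.continuousOn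
  have hd0glob : ∀ e, φ x d0 ≤ φ x e := by
    intro e
    by_cases hcase : ‖e‖ ≤ R
    · exact hd0min (by simpa [Metric.mem_closedBall, dist_zero_right] using hcase)
    · push_neg at hcase
      have he1 : (1:ℝ) ≤ ‖e‖ := le_trans hR1 hcase.le
      have hco := coercive e he1
      have h2M : 2 * M < ‖e‖ * μ := by
        have hmax : 2 * M / μ < ‖e‖ := lt_trans hRM hcase
        exact (div_lt_iff₀ hμ).mp hmax
      have hpos : 0 < φ x e := by nlinarith [he1, h2M, hco]
      have h0 : φ x d0 ≤ φ x 0 :=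
        hd0min (by simp [Metric.mem_closedBall, hRpos.le])
      rw [hφ0] at h0
      linarith
  -- uniqueness
  have uniq : ∀ d1 d2 : EuclideanSpace ℝ (Fin n),
      (∀ e, φ x d1 ≤ φ x e) → (∀ e, φ x d2 ≤ φ x e) → d1 = d2 := by
    intro d1 d2 h1 h2
    have hk := key d1 d2 (1/2) (by norm_num) (by norm_num)
    have e1 := h1 ((1/2 : ℝ) • d1 + (1 - 1/2 : ℝ) • d2)
    have e2 := h1 d2
    have e3 := h2 d1
    have hnorm : ‖d1 - d2‖^2 ≤ 0 := by nlinarith [hk, e1, e2, e3, hμ]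
    have : ‖d1 - d2‖ = 0 := by nlinarith [norm_nonneg (d1 - d2), hnorm]
    exact sub_eq_zero.mp (norm_eq_zero.mp this)
  -- directional derivatives
  have dirF : ∀ (i : Fin m) (d : EuclideanSpace ℝ (Fin n)), ∃ T : ℝ,
      (∀ t : ℝ, 0 < t → T ≤ ⟪f' i x, d⟫ + (g i (x + t • d) - g i x) / t) ∧
      Tendsto (fun t : ℝ => (F i (x + t • d) - F i x) / t) (𝓝[>] (0:ℝ)) (𝓝 T) ∧
      Tendsto (fun t : ℝ => ⟪f' i x, d⟫ + (g i (x + t • d) - g i x) / t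
        + t / 2 * ⟪d, f'' i x d⟫) (𝓝[>] (0:ℝ)) (𝓝 T) := by
    intro i d
    obtain ⟨L, hL1, hL2⟩ := aux_dir (g i) (hg i) x d
    refine ⟨⟪f' i x, d⟫ + L, fun t ht => by linarith [hL1 t ht], ?_, ?_⟩
    · -- limit of F quotient
      have hfd : HasDerivAt (fun t : ℝ => f i (x + t • d)) ⟪f' i x, d⟫ 0 := by
        have hc : HasDerivAt (fun t : ℝ => x + t • d) d 0 := by
          simpa using ((hasDerivAt_id (0:ℝ)).smul_const d).const_add x
        have hfx : HasFDerivAt (f i) (InnerProductSpace.toDual ℝ _ (f' i x))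
            (x + (0:ℝ) • d) := by
          simpa using (hgrad i x).hasFDerivAt
        have := hfx.comp_hasDerivAt 0 hc
        simp at this
        exact this
      have hslope : Tendsto (fun t : ℝ => (f i (x + t • d) - f i x) / t)
          (𝓝[>] (0:ℝ)) (𝓝 ⟪f' i x, d⟫) := by
        have h2 := (hasDerivAt_iff_tendsto_slope.mp hfd).mono_left
          (nhdsWithin_mono 0 (fun t ht => ne_of_gt ht))
        refine h2.congr fun t => ?_
        rw [slope_def_field]
        simp
      have hsum := hslope.add hL2
      refine hsum.congr fun t => ?_
      rw [hF, hF]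
      ring
    · -- limit of the subproblem quotient
      have hquad : Tendsto (fun t : ℝ => t / 2 * ⟪d, f'' i x d⟫) (𝓝[>] (0:ℝ)) (𝓝 0) := by
        have : Tendsto (fun t : ℝ => t / 2 * ⟪d, f'' i x d⟫) (𝓝 (0:ℝ))
            (𝓝 ((0:ℝ) / 2 * ⟪d, f'' i x d⟫)) := by
          exact ((continuous_id.div_const 2).mul continuous_const).tendsto 0
        simpa using this.mono_left nhdsWithin_le_nhds
      have hc : Tendsto (fun _ : ℝ => ⟪f' i x, d⟫) (𝓝[>] (0:ℝ)) (𝓝 ⟪f' i x, d⟫) :=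
        tendsto_const_nhds
      have := (hc.add hL2).add hquad
      simpa using this
  choose T hT1 hT2 hT3 using dirF
  refine ⟨⟨d0, hd0glob, fun y hy => uniq y d0 hy hd0glob⟩, ?_⟩
  intro dx hdxmin
  constructor
  · rintro rfl d
    by_contra hno
    push_neg at hno
    have hneg : ∀ i : Fin m, T i d < 0 := by
      intro i
      by_contra hge
      push_neg at hge
      exact hno i (T i d) hge (hT2 i d)
    have hev : ∀ᶠ t in 𝓝[>] (0:ℝ), ∀ i : Fin m,
        ⟪f' i x, d⟫ + (g i (x + t • d) - g i x) / t + t / 2 * ⟪d, f'' i x d⟫ < 0 := by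
      rw [eventually_all]
      intro i
      exact (hT3 i d).eventually_lt_const (hneg i)
    obtain ⟨t, htneg, ht0⟩ := (hev.and self_mem_nhdsWithin).exists
    have ht0' : (0:ℝ) < t := ht0
    have hφt : φ x (t • d) < 0 := by
      rw [hφ]
      refine (Finset.sup'_lt_iff (H := _)).mpr ?_
      intro i _
      have heq : ⟪f' i x, t • d⟫ + g i (x + t • d) - g i x + (1/2) * ⟪t • d, f'' i x (t • d)⟫
          = t * (⟪f' i x, d⟫ + (g i (x + t • d) - g i x) / t + t / 2 * ⟪d, f'' i x d⟫) := by
        rw [real_inner_smul_right, _root_.map_smul, real_inner_smul_left,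
          real_inner_smul_right]
        field_simp
        ring
      rw [heq]
      exact mul_neg_of_pos_of_neg ht0' (htneg i)
    have := hdxmin (t • d)
    rw [hφ0] at this
    linarith
  · intro hcrit
    by_contra hdx0
    have hφdx_le : φ x dx ≤ 0 := by
      have := hdxmin 0; rwa [hφ0] at this
    have hφdx_lt : φ x dx < 0 := by
      rcases lt_or_eq_of_le hφdx_le with h | h
      · exact h
      · exfalso
        have h0min : ∀ e, φ x 0 ≤ φ x e := by
          intro e
          rw [hφ0, ← h]
          exact hdxmin e
        exact hdx0 (uniq dx 0 hdxmin h0min)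
    obtain ⟨i, L, hL0, hLt⟩ := hcrit dx
    have huniq : L = T i dx := tendsto_nhds_unique hLt (hT2 i dx)
    have h1 : T i dx ≤ ⟪f' i x, dx⟫ + (g i (x + dx) - g i x) := by
      have := hT1 i dx 1 one_pos
      simpa using this
    have hψ := hle i dx
    have hq := hsc i x dx
    have hdxpos : 0 < ‖dx‖^2 := by
      have : ‖dx‖ ≠ 0 := fun h => hdx0 (norm_eq_zero.mp h)
      positivity
    nlinarith [hL0, huniq, h1, hψ, hq, hdxpos, hμ, hφdx_lt]
end

section
/- Suppose each f_i is twice continuously differentiable and μ-strongly convex for some μ > 0. Let (x^k) be a sequence in ℝⁿ converging to x*, for each k let d^k be the minimizer of φ_{x^k}, and suppose d^k converges to d*. Then d* is the minimizer of φ_{x*}. -/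
open Filter Topology MeasureTheory
open scoped RealInnerProductSpace

private lemma continuous_finset_sup' {α β : Type*} [TopologicalSpace α]
    [LinearOrder β] [TopologicalSpace β] [OrderClosedTopology β]
    {ι : Type*} {s : Finset ι} (hs : s.Nonempty) {f : ι → α → β}
    (hf : ∀ i ∈ s, Continuous (f i)) :
    Continuous fun x => s.sup' hs (fun i => f i x) := by
  induction hs using Finset.Nonempty.cons_induction with
  | singleton i =>
    exact (continuous_congr fun x => Finset.sup'_singleton ..).2 (hf i (by simp))
  | cons i s hi hs ih =>
    refine (continuous_congr fun x => Finset.sup'_cons hs (fun j => f j x)).2 ?_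
    exact (hf i (by simp)).max (ih fun j hj => hf j (Finset.mem_cons_of_mem hj))

theorem minimizers_converge_to_minimizer
    {n m : ℕ} (hn : 0 < n) (hm : 0 < m) {μ : ℝ} (hμ : 0 < μ)
    (f g F : Fin m → EuclideanSpace ℝ (Fin n) → ℝ)
    (f' : Fin m → EuclideanSpace ℝ (Fin n) → EuclideanSpace ℝ (Fin n))
    (f'' : Fin m → EuclideanSpace ℝ (Fin n) → (EuclideanSpace ℝ (Fin n) →L[ℝ] EuclideanSpace ℝ (Fin n)))
    (hgrad : ∀ i x, HasGradientAt (f i) (f' i x) x)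
    (hhess : ∀ i x, HasFDerivAt (f' i) (f'' i x) x)
    (hcont : ∀ i, Continuous (f'' i))
    (hg : ∀ i, ConvexOn ℝ Set.univ (g i))
    (hF : ∀ i x, F i x = f i x + g i x)
    (hsc : ∀ i x u, μ * ‖u‖ ^ 2 ≤ ⟪u, f'' i x u⟫)
    (φ : EuclideanSpace ℝ (Fin n) → EuclideanSpace ℝ (Fin n) → ℝ)
    (hφ : ∀ y e, φ y e = Finset.univ.sup' ⟨⟨0, hm⟩, Finset.mem_univ _⟩ fun i =>
      ⟪f' i y, e⟫ + g i (y + e) - g i y + (1/2) * ⟪e, f'' i y e⟫)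
    (x : ℕ → EuclideanSpace ℝ (Fin n)) (d : ℕ → EuclideanSpace ℝ (Fin n)) (xs ds : EuclideanSpace ℝ (Fin n))
    (hmin : ∀ k, ∀ e : EuclideanSpace ℝ (Fin n), φ (x k) (d k) ≤ φ (x k) e)
    (hx : Tendsto x atTop (𝓝 xs))
    (hd : Tendsto d atTop (𝓝 ds)) :
    ∀ e : EuclideanSpace ℝ (Fin n), φ xs ds ≤ φ xs e := by
  have hgc : ∀ i, Continuous (g i) := fun i => by
    have := (hg i).continuousOn isOpen_univ
    exact continuousOn_univ.1 this
  have hf'c : ∀ i, Continuous (f' i) := fun i =>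
    continuous_iff_continuousAt.2 fun y => (hhess i y).continuousAt
  have hφc : Continuous fun p : EuclideanSpace ℝ (Fin n) × EuclideanSpace ℝ (Fin n) =>
      φ p.1 p.2 := by
    have : (fun p : EuclideanSpace ℝ (Fin n) × EuclideanSpace ℝ (Fin n) => φ p.1 p.2)
        = fun p => Finset.univ.sup' ⟨⟨0, hm⟩, Finset.mem_univ _⟩ fun i =>
          ⟪f' i p.1, p.2⟫ + g i (p.1 + p.2) - g i p.1 + (1/2) * ⟪p.2, f'' i p.1 p.2⟫ := by
      funext p; exact hφ p.1 p.2
    rw [this]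
    refine continuous_finset_sup' _ fun i _ => ?_
    refine ((((((hf'c i).comp continuous_fst).inner continuous_snd).add
      ((hgc i).comp (continuous_fst.add continuous_snd))).sub
      ((hgc i).comp continuous_fst)).add
      (continuous_const.mul (continuous_snd.inner ?_)))
    exact ((hcont i).comp continuous_fst).clm_apply continuous_snd
  intro e
  have h1 : Tendsto (fun k => φ (x k) (d k)) atTop (𝓝 (φ xs ds)) :=
    (hφc.tendsto (xs, ds)).comp (hx.prodMk_nhds hd)
  have h2 : Tendsto (fun k => φ (x k) e) atTop (𝓝 (φ xs e)) :=
    (hφc.tendsto (xs, e)).comp (hx.prodMk_nhds tendsto_const_nhds)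
  exact le_of_tendsto_of_tendsto' h1 h2 fun k => hmin k e
end

section
/- Suppose each f_i is twice continuously differentiable and μ-strongly convex for some μ > 0, and for x ∈ ℝⁿ let d(x) be the minimizer of φ_x and θ(x) = φ_x(d(x)). Then θ(x) ≤ −(μ/2)‖d(x)‖². -/
open Filter Topology MeasureTheory
open scoped RealInnerProductSpace

theorem theta_le_neg_half_mu_norm_sq
    {n m : ℕ} (hn : 0 < n) (hm : 0 < m) {μ : ℝ} (hμ : 0 < μ)
    (f g F : Fin m → EuclideanSpace ℝ (Fin n) → ℝ)
    (f' : Fin m → EuclideanSpace ℝ (Fin n) → EuclideanSpace ℝ (Fin n))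
    (f'' : Fin m → EuclideanSpace ℝ (Fin n) → (EuclideanSpace ℝ (Fin n) →L[ℝ] EuclideanSpace ℝ (Fin n)))
    (hgrad : ∀ i x, HasGradientAt (f i) (f' i x) x)
    (hhess : ∀ i x, HasFDerivAt (f' i) (f'' i x) x)
    (hcont : ∀ i, Continuous (f'' i))
    (hg : ∀ i, ConvexOn ℝ Set.univ (g i))
    (hF : ∀ i x, F i x = f i x + g i x)
    (hsc : ∀ i x u, μ * ‖u‖ ^ 2 ≤ ⟪u, f'' i x u⟫)
    (φ : EuclideanSpace ℝ (Fin n) → EuclideanSpace ℝ (Fin n) → ℝ)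
    (hφ : ∀ y e, φ y e = Finset.univ.sup' ⟨⟨0, hm⟩, Finset.mem_univ _⟩ fun i =>
      ⟪f' i y, e⟫ + g i (y + e) - g i y + (1/2) * ⟪e, f'' i y e⟫)
    (x dx : EuclideanSpace ℝ (Fin n)) (hmin : ∀ e : EuclideanSpace ℝ (Fin n), φ x dx ≤ φ x e) :
    φ x dx ≤ -(μ / 2) * ‖dx‖ ^ 2 := by
  set N := ‖dx‖ ^ 2 with hN
  have hNnonneg : 0 ≤ N := by positivity
  -- key: for all t ∈ (0,1), φ x dx ≤ -(μ*t/2) * N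
  have key : ∀ t : ℝ, t ∈ Set.Ioo (0:ℝ) 1 → φ x dx ≤ -(μ * t / 2) * N := by
    intro t ⟨ht0, ht1⟩
    have hstep : φ x (t • dx) ≤ t * φ x dx - μ * t * (1 - t) / 2 * N := by
      rw [hφ]
      apply Finset.sup'_le
      intro i _
      have hQ : μ * N ≤ ⟪dx, f'' i x dx⟫ := hsc i x dx
      have hgc : g i (x + t • dx) ≤ t * g i (x + dx) + (1 - t) * g i x := by
        have := (hg i).2 (Set.mem_univ (x + dx)) (Set.mem_univ x) ht0.le
          (by linarith : (0:ℝ) ≤ 1 - t) (by ring)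
        have heq : t • (x + dx) + (1 - t) • x = x + t • dx := by module
        rw [heq] at this
        simpa using this
      have h1 : ⟪f' i x, t • dx⟫ = t * ⟪f' i x, dx⟫ := real_inner_smul_right _ _ _
      have h2 : ⟪t • dx, f'' i x (t • dx)⟫ = t * t * ⟪dx, f'' i x dx⟫ := by
        rw [(f'' i x).map_smul, real_inner_smul_left, real_inner_smul_right]; ring
      have hile : ⟪f' i x, dx⟫ + g i (x + dx) - g i x + (1/2) * ⟪dx, f'' i x dx⟫ ≤ φ x dx := by
        rw [hφ]
        exact Finset.le_sup' (fun i => ⟪f' i x, dx⟫ + g i (x + dx) - g i x + (1/2) * ⟪dx, f'' i x dx⟫) (Finset.mem_univ i)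
      rw [h1, h2]
      nlinarith [hQ, hile, ht0.le, ht1.le, hNnonneg, mul_pos ht0 (by linarith : (0:ℝ) < 1 - t)]
    have hmt := hmin (t • dx)
    have h1t : (0:ℝ) < 1 - t := by linarith
    -- (1 - t) * φ x dx ≤ -(μ * t * (1-t)/2) * N
    have : (1 - t) * φ x dx ≤ (1 - t) * (-(μ * t / 2) * N) := by nlinarith
    exact le_of_mul_le_mul_left (by linarith) h1t
  -- take limit t → 1⁻
  have htend : Tendsto (fun t : ℝ => -(μ * t / 2) * N) (𝓝[<] (1:ℝ)) (𝓝 (-(μ / 2) * N)) := by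
    have hc : Continuous (fun t : ℝ => -(μ * t / 2) * N) := by fun_prop
    have := (hc.tendsto 1).mono_left (nhdsWithin_le_nhds (s := Set.Iio (1:ℝ)))
    simpa using this
  refine ge_of_tendsto htend ?_
  filter_upwards [Ioo_mem_nhdsLT_of_mem (Set.mem_Ioc.mpr ⟨zero_lt_one, le_refl (1:ℝ)⟩)] with t ht
  exact key t ht
end

section
/- (Modified fundamental inequality.) Let x, d ∈ ℝⁿ and λ ∈ Δ_m satisfy −∇f_λ(x) − ∇²f_λ(x)d ∈ ∂g_λ(x+d), and set x⁺ := x + d. Then for every y ∈ ℝⁿ: F_λ(x⁺) − F_λ(y) ≤ ½⟨x−y, ∇²f_λ(x)(x−y)⟩ − ½⟨x⁺−x, ∇²f_λ(x)(x⁺−x)⟩ − ½⟨x⁺−y, ∇²f_λ(x)(x⁺−y)⟩ + ⟨x⁺−x, ∫₀¹ (∫₀¹ ∇²f_λ(x+st(x⁺−x)) ds) (t(x⁺−x)) dt⟩ − ⟨y−x, ∫₀¹ (∫₀¹ ∇²f_λ(x+st(y−x)) ds) (t(y−x)) dt⟩. -/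
open Filter Topology MeasureTheory
open scoped RealInnerProductSpace

section Aux

variable {E : Type*} [NormedAddCommGroup E] [InnerProductSpace ℝ E] [CompleteSpace E]

/-- Taylor expansion with integral remainder in double-integral form. -/
lemma taylor_aux (φ : E → ℝ) (φ' : E → E) (H : E → E →L[ℝ] E)
    (hgrad : ∀ y, HasGradientAt φ (φ' y) y)
    (hH : ∀ y, HasFDerivAt φ' (H y) y)
    (hc : Continuous H) (x u : E) :
    φ (x + u) = φ x + ⟪φ' x, u⟫ +
      ⟪u, ∫ t in (0:ℝ)..1, (∫ s in (0:ℝ)..1, H (x + (s * t) • u)) (t • u)⟫ := by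
  have hφ'c : Continuous φ' := by
    rw [continuous_iff_continuousAt]; exact fun y => (hH y).continuousAt
  -- Step A: inner integral identity
  have hA : ∀ t : ℝ, (∫ s in (0:ℝ)..1, H (x + (s * t) • u)) (t • u)
      = φ' (x + t • u) - φ' x := by
    intro t
    have hop : IntervalIntegrable (fun s : ℝ => H (x + (s * t) • u)) volume 0 1 := by
      apply Continuous.intervalIntegrable
      exact hc.comp (by fun_prop)
    rw [ContinuousLinearMap.intervalIntegral_apply hop (t • u)]
    have hder : ∀ s ∈ Set.uIcc (0:ℝ) 1,
        HasDerivAt (fun s : ℝ => φ' (x + s • (t • u))) (H (x + (s * t) • u) (t • u)) s := by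
      intro s _
      have hline : HasDerivAt (fun s : ℝ => x + s • (t • u)) (t • u) s := by
        simpa using ((hasDerivAt_id s).smul_const (t • u)).const_add x
      have h2 := (hH (x + s • (t • u))).comp_hasDerivAt s hline
      simpa [smul_smul, Function.comp_def] using h2
    have hint : IntervalIntegrable (fun s : ℝ => H (x + (s * t) • u) (t • u)) volume 0 1 := by
      apply Continuous.intervalIntegrable
      exact (hc.comp (by fun_prop)).clm_apply continuous_const
    have h3 := intervalIntegral.integral_eq_sub_of_hasDerivAt hder hint
    simpa [smul_smul] using h3
  -- Step B: FTC for φ along the segment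
  have hB : ∀ t ∈ Set.uIcc (0:ℝ) 1,
      HasDerivAt (fun t : ℝ => φ (x + t • u)) ⟪φ' (x + t • u), u⟫ t := by
    intro t _
    have hline : HasDerivAt (fun t : ℝ => x + t • u) u t := by
      simpa using ((hasDerivAt_id t).smul_const u).const_add x
    have h2 := ((hgrad (x + t • u)).hasFDerivAt).comp_hasDerivAt t hline
    simpa [InnerProductSpace.toDual_apply_apply, Function.comp_def] using h2
  have hBint : IntervalIntegrable (fun t : ℝ => ⟪φ' (x + t • u), u⟫) volume 0 1 := by
    apply Continuous.intervalIntegrable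
    exact (hφ'c.comp (by fun_prop)).inner continuous_const
  have hFTC : ∫ t in (0:ℝ)..1, ⟪φ' (x + t • u), u⟫ = φ (x + u) - φ x := by
    have h3 := intervalIntegral.integral_eq_sub_of_hasDerivAt hB hBint
    simpa using h3
  -- rewrite the outer integral
  have hGc : Continuous fun t : ℝ => φ' (x + t • u) - φ' x :=
    (hφ'c.comp (by fun_prop)).sub continuous_const
  have hGint : IntervalIntegrable (fun t : ℝ => φ' (x + t • u) - φ' x) volume 0 1 :=
    hGc.intervalIntegrable 0 1
  have hout : (∫ t in (0:ℝ)..1, (∫ s in (0:ℝ)..1, H (x + (s * t) • u)) (t • u))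
      = ∫ t in (0:ℝ)..1, (φ' (x + t • u) - φ' x) :=
    intervalIntegral.integral_congr (fun t _ => hA t)
  have hpush : ⟪u, ∫ t in (0:ℝ)..1, (φ' (x + t • u) - φ' x)⟫
      = ∫ t in (0:ℝ)..1, ⟪u, φ' (x + t • u) - φ' x⟫ :=
    ((innerSL ℝ u).intervalIntegral_comp_comm hGint).symm
  have hsplit : ∫ t in (0:ℝ)..1, ⟪u, φ' (x + t • u) - φ' x⟫
      = (∫ t in (0:ℝ)..1, ⟪φ' (x + t • u), u⟫) - ∫ t in (0:ℝ)..1, ⟪(φ' x : E), u⟫ := by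
    rw [← intervalIntegral.integral_sub hBint (by
      apply Continuous.intervalIntegrable; exact continuous_const)]
    apply intervalIntegral.integral_congr
    intro t _
    simp [inner_sub_right, real_inner_comm u]
  have hconst : ∫ t in (0:ℝ)..1, ⟪(φ' x : E), u⟫ = ⟪φ' x, u⟫ := by simp
  rw [hout, hpush, hsplit, hconst, hFTC]
  ring

end Aux

theorem modified_fundamental_inequality
    {n m : ℕ} (hn : 0 < n) (hm : 0 < m)
    (f g F : Fin m → EuclideanSpace ℝ (Fin n) → ℝ)
    (f' : Fin m → EuclideanSpace ℝ (Fin n) → EuclideanSpace ℝ (Fin n))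
    (f'' : Fin m → EuclideanSpace ℝ (Fin n) → (EuclideanSpace ℝ (Fin n) →L[ℝ] EuclideanSpace ℝ (Fin n)))
    (hgrad : ∀ i x, HasGradientAt (f i) (f' i x) x)
    (hhess : ∀ i x, HasFDerivAt (f' i) (f'' i x) x)
    (hcont : ∀ i, Continuous (f'' i))
    (hg : ∀ i, ConvexOn ℝ Set.univ (g i))
    (hF : ∀ i x, F i x = f i x + g i x)
    (lam : Fin m → ℝ) (hlam : (∀ i, 0 ≤ lam i) ∧ ∑ i, lam i = 1)
    (Flam glam : EuclideanSpace ℝ (Fin n) → ℝ)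
    (gradlam : EuclideanSpace ℝ (Fin n) → EuclideanSpace ℝ (Fin n))
    (Hlam : EuclideanSpace ℝ (Fin n) → (EuclideanSpace ℝ (Fin n) →L[ℝ] EuclideanSpace ℝ (Fin n)))
    (hFlam : ∀ y, Flam y = ∑ i, lam i * F i y)
    (hglam : ∀ y, glam y = ∑ i, lam i * g i y)
    (hgradlam : ∀ y, gradlam y = ∑ i, lam i • f' i y)
    (hHlam : ∀ y, Hlam y = ∑ i, lam i • f'' i y)
    (x d : EuclideanSpace ℝ (Fin n)) (xp : EuclideanSpace ℝ (Fin n)) (hxp : xp = x + d)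
    (hsub : ∀ z, glam z ≥ glam (x + d) + ⟪-gradlam x - (Hlam x) d, z - (x + d)⟫)
    :
    ∀ y : EuclideanSpace ℝ (Fin n),
      Flam xp - Flam y ≤
        (1/2) * ⟪x - y, Hlam x (x - y)⟫ - (1/2) * ⟪xp - x, Hlam x (xp - x)⟫
          - (1/2) * ⟪xp - y, Hlam x (xp - y)⟫
        + ⟪xp - x, ∫ t in (0:ℝ)..1, (∫ s in (0:ℝ)..1, Hlam (x + (s * t) • (xp - x))) (t • (xp - x))⟫
        - ⟪y - x, ∫ t in (0:ℝ)..1, (∫ s in (0:ℝ)..1, Hlam (x + (s * t) • (y - x))) (t • (y - x))⟫ := by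
  classical
  set flam : EuclideanSpace ℝ (Fin n) → ℝ := fun y => ∑ i, lam i * f i y with hflamdef
  -- flam has gradient gradlam everywhere
  have hgradall : ∀ y, HasGradientAt flam (gradlam y) y := by
    intro y
    rw [hasGradientAt_iff_hasFDerivAt, hgradlam]
    have : (InnerProductSpace.toDual ℝ (EuclideanSpace ℝ (Fin n))) (∑ i, lam i • f' i y)
        = ∑ i, lam i • (InnerProductSpace.toDual ℝ (EuclideanSpace ℝ (Fin n))) (f' i y) := by
      simp [map_sum, _root_.map_smul]
    rw [this]
    exact HasFDerivAt.fun_sum fun i _ =>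
      ((hgrad i y).hasFDerivAt).const_mul (lam i)
  have hhessall : ∀ y, HasFDerivAt gradlam (Hlam y) y := by
    intro y
    rw [hHlam]
    have hfun : gradlam = fun z => ∑ i, lam i • f' i z := funext hgradlam
    rw [hfun]
    exact HasFDerivAt.fun_sum fun i _ => (hhess i y).const_smul (lam i)
  have hHc : Continuous Hlam := by
    have : Hlam = fun y => ∑ i, lam i • f'' i y := funext hHlam
    rw [this]
    exact continuous_finset_sum _ fun i _ => (hcont i).const_smul (lam i)
  -- symmetry of the Hessian
  have hsym : ∀ v w : EuclideanSpace ℝ (Fin n), ⟪Hlam x v, w⟫ = ⟪Hlam x w, v⟫ := by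
    set T : EuclideanSpace ℝ (Fin n) →L[ℝ] (EuclideanSpace ℝ (Fin n) →L[ℝ] ℝ) :=
      (InnerProductSpace.toDual ℝ (EuclideanSpace ℝ (Fin n))).toLinearIsometry.toContinuousLinearMap with hT
    have hf1 : ∀ y, HasFDerivAt flam (T (gradlam y)) y := fun y =>
      (hgradall y).hasFDerivAt
    have hf2 : HasFDerivAt (fun y => T (gradlam y)) (T.comp (Hlam x)) x :=
      T.hasFDerivAt.comp x (hhessall x)
    intro v w
    have := second_derivative_symmetric hf1 hf2 v w
    exact this
  intro y
  -- Taylor expansions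
  have key1 := taylor_aux flam gradlam Hlam hgradall hhessall hHc x (xp - x)
  have key2 := taylor_aux flam gradlam Hlam hgradall hhessall hHc x (y - x)
  have e1 : x + (xp - x) = xp := by abel
  have e2 : x + (y - x) = y := by abel
  rw [e1] at key1
  rw [e2] at key2
  -- split Flam
  have hFsplit : ∀ z, Flam z = flam z + glam z := by
    intro z
    simp only [hFlam, hglam, hF, hflamdef, mul_add, Finset.sum_add_distrib]
  have hd : d = xp - x := by rw [hxp]; abel
  have hsub' := hsub y
  rw [← hxp, hd] at hsub'
  have hsubexp : ⟪-gradlam x - (Hlam x) (xp - x), y - xp⟫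
      = -⟪gradlam x, y - xp⟫ - ⟪Hlam x (xp - x), y - xp⟫ := by
    rw [inner_sub_left, inner_neg_left]
  -- gradient terms cancel
  have hg0 : ⟪gradlam x, xp - x⟫ + ⟪gradlam x, y - xp⟫ = ⟪gradlam x, y - x⟫ := by
    rw [← inner_add_right]
    congr 1
    abel
  -- quadratic identity
  have hq : ⟪Hlam x (xp - x), y - xp⟫
      = (1/2) * ⟪x - y, Hlam x (x - y)⟫ - (1/2) * ⟪xp - x, Hlam x (xp - x)⟫
        - (1/2) * ⟪xp - y, Hlam x (xp - y)⟫ := by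
    have h1 : x - y = (xp - y) - (xp - x) := by abel
    have h2 : y - xp = -(xp - y) := by abel
    rw [h1, h2, inner_neg_right]
    simp only [map_sub, inner_sub_left, inner_sub_right]
    linarith [hsym x y, hsym x xp, hsym y xp, hsym x x, hsym y y, hsym xp xp,
      real_inner_comm x (Hlam x x), real_inner_comm x (Hlam x y), real_inner_comm x (Hlam x xp),
      real_inner_comm y (Hlam x x), real_inner_comm y (Hlam x y), real_inner_comm y (Hlam x xp),
      real_inner_comm xp (Hlam x x), real_inner_comm xp (Hlam x y), real_inner_comm xp (Hlam x xp)]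
  have hFxp := hFsplit xp
  have hFy := hFsplit y
  rw [hFxp, hFy]
  linarith [hq, hsub', key1, key2, hg0, hsubexp]
end

section
/- Suppose each f_i is a strongly convex quadratic, f_i(x) = ½⟨x, A_i x⟩ + ⟨b_i, x⟩ + c_i with A_i symmetric positive definite. Let x ∈ ℝⁿ, let d be a minimizer of φ_x, and let σ ∈ (0,1]. Then F_i(x+d) − F_i(x) ≤ σ·θ(x) for every i ∈ [m]; i.e., the full Newton-type proximal step t = 1 satisfies the Armijo-type acceptance condition. -/
open Filter Topology MeasureTheory
open scoped RealInnerProductSpace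

theorem quadratic_full_step_satisfies_armijo
    {n m : ℕ} (hn : 0 < n) (hm : 0 < m)
    (A : Fin m → EuclideanSpace ℝ (Fin n) →L[ℝ] EuclideanSpace ℝ (Fin n))
    (b : Fin m → EuclideanSpace ℝ (Fin n)) (c : Fin m → ℝ)
    (hAsymm : ∀ i u v, ⟪A i u, v⟫ = ⟪u, A i v⟫)
    (hApos : ∀ i u, u ≠ 0 → (0:ℝ) < ⟪u, A i u⟫)
    (f g F : Fin m → EuclideanSpace ℝ (Fin n) → ℝ)
    (hf : ∀ i y, f i y = (1/2) * ⟪y, A i y⟫ + ⟪b i, y⟫ + c i)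
    (hg : ∀ i, ConvexOn ℝ Set.univ (g i))
    (hF : ∀ i y, F i y = f i y + g i y)
    (φ : EuclideanSpace ℝ (Fin n) → EuclideanSpace ℝ (Fin n) → ℝ)
    (hφ : ∀ y e, φ y e = Finset.univ.sup' ⟨⟨0, hm⟩, Finset.mem_univ _⟩ fun i =>
      ⟪A i y + b i, e⟫ + g i (y + e) - g i y + (1/2) * ⟪e, A i e⟫)
    (x d : EuclideanSpace ℝ (Fin n)) (hd : ∀ e : EuclideanSpace ℝ (Fin n), φ x d ≤ φ x e)
    (σ : ℝ) (hσ : 0 < σ ∧ σ ≤ 1) :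
    ∀ i, F i (x + d) - F i x ≤ σ * φ x d := by
  -- φ x d ≤ φ x 0 ≤ 0
  have hφ0 : φ x 0 ≤ 0 := by
    rw [hφ]
    apply Finset.sup'_le
    intro i _
    simp
  have hφd : φ x d ≤ 0 := le_trans (hd 0) hφ0
  intro i
  have hterm : F i (x + d) - F i x
      = ⟪A i x + b i, d⟫ + g i (x + d) - g i x + (1/2) * ⟪d, A i d⟫ := by
    rw [hF, hF, hf, hf]
    have h1 : ⟪x + d, A i (x + d)⟫ = ⟪x, A i x⟫ + ⟪x, A i d⟫ + ⟪d, A i x⟫ + ⟪d, A i d⟫ := by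
      rw [map_add, inner_add_left, inner_add_right, inner_add_right]; ring
    have h2 : ⟪x, A i d⟫ = ⟪d, A i x⟫ := by
      rw [← hAsymm i x d, real_inner_comm]
    have h3 : ⟪b i, x + d⟫ = ⟪b i, x⟫ + ⟪b i, d⟫ := inner_add_right _ _ _
    have h4 : ⟪A i x + b i, d⟫ = ⟪d, A i x⟫ + ⟪b i, d⟫ := by
      rw [inner_add_left, hAsymm i x d, h2]
    rw [h1, h2, h3, h4]; ring
  have hle : F i (x + d) - F i x ≤ φ x d := by
    rw [hterm, hφ]
    apply Finset.le_sup' (f := fun i => ⟪A i x + b i, d⟫ + g i (x + d) - g i x + (1/2) * ⟪d, A i d⟫) (Finset.mem_univ i)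
  nlinarith [hσ.1, hσ.2]
end

section
/- Suppose each f_i is a strongly convex quadratic with Hessian A_i symmetric positive definite. Let x, d ∈ ℝⁿ and λ ∈ Δ_m satisfy −∇f_λ(x) − A_λ d ∈ ∂g_λ(x+d), where A_λ := Σ_i λ_i A_i, and set x⁺ := x + d. Then for every y ∈ ℝⁿ: F_λ(x⁺) − F_λ(y) ≤ −½⟨x⁺−y, A_λ(x⁺−y)⟩. -/
open Filter Topology MeasureTheory
open scoped RealInnerProductSpace

theorem quadratic_fundamental_inequality
    {n m : ℕ} (hn : 0 < n) (hm : 0 < m)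
    (A : Fin m → EuclideanSpace ℝ (Fin n) →L[ℝ] EuclideanSpace ℝ (Fin n))
    (b : Fin m → EuclideanSpace ℝ (Fin n)) (c : Fin m → ℝ)
    (hAsymm : ∀ i u v, ⟪A i u, v⟫ = ⟪u, A i v⟫)
    (hApos : ∀ i u, u ≠ 0 → (0:ℝ) < ⟪u, A i u⟫)
    (f g F : Fin m → EuclideanSpace ℝ (Fin n) → ℝ)
    (hf : ∀ i y, f i y = (1/2) * ⟪y, A i y⟫ + ⟪b i, y⟫ + c i)
    (hg : ∀ i, ConvexOn ℝ Set.univ (g i))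
    (hF : ∀ i y, F i y = f i y + g i y)
    (lam : Fin m → ℝ) (hlam : (∀ i, 0 ≤ lam i) ∧ ∑ i, lam i = 1)
    (Flam glam : EuclideanSpace ℝ (Fin n) → ℝ)
    (gradlam : EuclideanSpace ℝ (Fin n) → EuclideanSpace ℝ (Fin n))
    (Alam : EuclideanSpace ℝ (Fin n) →L[ℝ] EuclideanSpace ℝ (Fin n))
    (hFlam : ∀ y, Flam y = ∑ i, lam i * F i y)
    (hglam : ∀ y, glam y = ∑ i, lam i * g i y)
    (hgradlam : ∀ y, gradlam y = ∑ i, lam i • (A i y + b i))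
    (hAlam : Alam = ∑ i, lam i • A i)
    (x d : EuclideanSpace ℝ (Fin n)) (xp : EuclideanSpace ℝ (Fin n)) (hxp : xp = x + d)
    (hsub : ∀ z, glam z ≥ glam (x + d) + ⟪-gradlam x - Alam d, z - (x + d)⟫)
    :
    ∀ y : EuclideanSpace ℝ (Fin n), Flam xp - Flam y ≤ -(1/2) * ⟪xp - y, Alam (xp - y)⟫ := by
  intro y
  set blam : EuclideanSpace ℝ (Fin n) := ∑ i, lam i • b i with hblam
  set clam : ℝ := ∑ i, lam i * c i with hclam
  have hAlamApp : ∀ u, Alam u = ∑ i, lam i • (A i u) := by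
    intro u
    rw [hAlam]
    simp [ContinuousLinearMap.sum_apply]
  -- symmetry of Alam
  have hAlamSymm : ∀ u v, ⟪Alam u, v⟫ = ⟪u, Alam v⟫ := by
    intro u v
    rw [hAlamApp, hAlamApp, sum_inner, inner_sum]
    refine Finset.sum_congr rfl fun i _ => ?_
    rw [real_inner_smul_left, real_inner_smul_right, hAsymm]
  -- Flam decomposition
  have hFlam' : ∀ z, Flam z = (1/2) * ⟪z, Alam z⟫ + ⟪blam, z⟫ + clam + glam z := by
    intro z
    rw [hFlam, hglam, hAlamApp, inner_sum, hblam, sum_inner, hclam,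
      Finset.mul_sum, ← Finset.sum_add_distrib, ← Finset.sum_add_distrib,
      ← Finset.sum_add_distrib]
    refine Finset.sum_congr rfl fun i _ => ?_
    rw [hF, hf, real_inner_smul_right, real_inner_smul_left]
    ring
  -- gradlam x = Alam x + blam
  have hgrad : gradlam x = Alam x + blam := by
    rw [hgradlam, hAlamApp, hblam, ← Finset.sum_add_distrib]
    refine Finset.sum_congr rfl fun i _ => ?_
    rw [smul_add]
  -- the residual vector
  have hv : -gradlam x - Alam d = -(Alam xp + blam) := by
    rw [hgrad, hxp, map_add]
    abel
  -- subgradient inequality at y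
  have hsy := hsub y
  rw [← hxp] at hsy
  have hglam_ineq : glam xp - glam y ≤ -⟪Alam xp + blam, xp - y⟫ := by
    have h : ⟪-gradlam x - Alam d, y - xp⟫ = ⟪Alam xp + blam, xp - y⟫ := by
      rw [hv, inner_neg_left, ← inner_neg_right, neg_sub]
    linarith [hsy, h.le]
  rw [hFlam' xp, hFlam' y]
  have h1 : ⟪Alam xp, xp⟫ = ⟪xp, Alam xp⟫ := hAlamSymm xp xp
  have h2 : ⟪Alam xp, y⟫ = ⟪xp, Alam y⟫ := hAlamSymm xp y
  have h3 : ⟪y, Alam xp⟫ = ⟪Alam xp, y⟫ := real_inner_comm _ _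
  have hexp1 : ⟪Alam xp + blam, xp - y⟫
      = ⟪Alam xp, xp⟫ - ⟪Alam xp, y⟫ + ⟪blam, xp⟫ - ⟪blam, y⟫ := by
    rw [inner_add_left, inner_sub_right, inner_sub_right]; ring
  have hexp2 : ⟪xp - y, Alam (xp - y)⟫
      = ⟪xp, Alam xp⟫ - ⟪xp, Alam y⟫ - ⟪y, Alam xp⟫ + ⟪y, Alam y⟫ := by
    rw [map_sub, inner_sub_left, inner_sub_right, inner_sub_right]; ring
  linarith [hglam_ineq]
end

section
/- (Quadratic termination.) Suppose each f_i is a strongly convex quadratic with Hessian A_i symmetric positive definite. Let x, d ∈ ℝⁿ and λ ∈ Δ_m satisfy −∇f_λ(x) − A_λ d ∈ ∂g_λ(x+d), where A_λ := Σ_i λ_i A_i, and set x⁺ := x + d. If x* ∈ ℝⁿ satisfies F_i(x*) ≤ F_i(x⁺) for all i ∈ [m], then x⁺ = x*. In particular, the Newton-type proximal gradient step reaches the Pareto point dominating its iterates in one iteration. -/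
open Filter Topology MeasureTheory
open scoped RealInnerProductSpace

theorem quadratic_termination
    {n m : ℕ} (hn : 0 < n) (hm : 0 < m)
    (A : Fin m → EuclideanSpace ℝ (Fin n) →L[ℝ] EuclideanSpace ℝ (Fin n))
    (b : Fin m → EuclideanSpace ℝ (Fin n)) (c : Fin m → ℝ)
    (hAsymm : ∀ i u v, ⟪A i u, v⟫ = ⟪u, A i v⟫)
    (hApos : ∀ i u, u ≠ 0 → (0:ℝ) < ⟪u, A i u⟫)
    (f g F : Fin m → EuclideanSpace ℝ (Fin n) → ℝ)
    (hf : ∀ i y, f i y = (1/2) * ⟪y, A i y⟫ + ⟪b i, y⟫ + c i)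
    (hg : ∀ i, ConvexOn ℝ Set.univ (g i))
    (hF : ∀ i y, F i y = f i y + g i y)
    (lam : Fin m → ℝ) (hlam : (∀ i, 0 ≤ lam i) ∧ ∑ i, lam i = 1)
    (Flam glam : EuclideanSpace ℝ (Fin n) → ℝ)
    (gradlam : EuclideanSpace ℝ (Fin n) → EuclideanSpace ℝ (Fin n))
    (Alam : EuclideanSpace ℝ (Fin n) →L[ℝ] EuclideanSpace ℝ (Fin n))
    (hFlam : ∀ y, Flam y = ∑ i, lam i * F i y)
    (hglam : ∀ y, glam y = ∑ i, lam i * g i y)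
    (hgradlam : ∀ y, gradlam y = ∑ i, lam i • (A i y + b i))
    (hAlam : Alam = ∑ i, lam i • A i)
    (x d : EuclideanSpace ℝ (Fin n)) (xp : EuclideanSpace ℝ (Fin n)) (hxp : xp = x + d)
    (hsub : ∀ z, glam z ≥ glam (x + d) + ⟪-gradlam x - Alam d, z - (x + d)⟫)
    (xs : EuclideanSpace ℝ (Fin n)) (hxs : ∀ i, F i xs ≤ F i xp) :
    xp = xs := by
  obtain ⟨hlam0, hlam1⟩ := hlam
  set δ := xs - xp with hδ
  -- per-index quadratic expansion
  have key : ∀ i, f i xs = f i xp + ⟪A i xp + b i, δ⟫ + (1/2) * ⟪δ, A i δ⟫ := by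
    intro i
    have hsym : ⟪xp, A i xs⟫ = ⟪xs, A i xp⟫ := by
      rw [← hAsymm i xp xs, real_inner_comm]
    have h3 := hAsymm i xp xs
    have h4 := hAsymm i xp xp
    simp only [hf, hδ, map_sub, inner_sub_left, inner_sub_right, inner_add_left]
    linarith
  -- scalar sums
  set SG := ∑ i, lam i * ⟪A i xp + b i, δ⟫ with hSG
  set SQ := ∑ i, lam i * ⟪δ, A i δ⟫ with hSQ
  -- the subgradient inner product equals -SG
  have hG : ⟪-gradlam x - Alam d, δ⟫ = -SG := by
    have h1 : gradlam x + Alam d = ∑ i, lam i • (A i xp + b i) := by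
      rw [hgradlam, hAlam]
      rw [ContinuousLinearMap.sum_apply]
      rw [← Finset.sum_add_distrib]
      refine Finset.sum_congr rfl fun i _ => ?_
      rw [ContinuousLinearMap.smul_apply, ← smul_add, hxp, map_add]
      congr 1
      abel
    have h2 : -gradlam x - Alam d = -(gradlam x + Alam d) := by abel
    rw [h2, h1, inner_neg_left, sum_inner]
    simp only [real_inner_smul_left, hSG]
  -- Flam splits
  have hsplit : ∀ y, Flam y = (∑ i, lam i * f i y) + glam y := by
    intro y
    rw [hFlam, hglam, ← Finset.sum_add_distrib]
    exact Finset.sum_congr rfl fun i _ => by rw [hF]; ring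
  -- sum of quadratics
  have hfsum : (∑ i, lam i * f i xs) = (∑ i, lam i * f i xp) + SG + (1/2) * SQ := by
    rw [hSG, hSQ, Finset.mul_sum, ← Finset.sum_add_distrib, ← Finset.sum_add_distrib]
    exact Finset.sum_congr rfl fun i _ => by rw [key i]; ring
  have h1 : Flam xs ≤ Flam xp := by
    rw [hFlam, hFlam]
    exact Finset.sum_le_sum fun i _ => mul_le_mul_of_nonneg_left (hxs i) (hlam0 i)
  have h2 : glam xs ≥ glam xp - SG := by
    have := hsub xs
    rw [← hxp] at this
    rw [hG] at this
    linarith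
  have hSQle : SQ ≤ 0 := by
    have e1 := hsplit xs
    have e2 := hsplit xp
    linarith
  -- positivity
  by_contra hne
  have hδne' : δ ≠ 0 := fun h => hne (sub_eq_zero.mp h).symm
  have hex : ∃ j, 0 < lam j := by
    by_contra hno
    push_neg at hno
    have : ∀ i ∈ Finset.univ, lam i = 0 := fun i _ => le_antisymm (hno i) (hlam0 i)
    rw [Finset.sum_congr rfl this] at hlam1
    simp at hlam1
  obtain ⟨j, hj⟩ := hex
  have hpos : 0 < SQ := by
    have hterm : 0 < lam j * ⟪δ, A j δ⟫ := mul_pos hj (hApos j δ hδne')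
    have hnn : ∀ i ∈ Finset.univ, 0 ≤ lam i * ⟪δ, A i δ⟫ := fun i _ =>
      mul_nonneg (hlam0 i) (le_of_lt (hApos i δ hδne'))
    calc (0:ℝ) < lam j * ⟪δ, A j δ⟫ := hterm
      _ ≤ SQ := Finset.single_le_sum hnn (Finset.mem_univ j)
  linarith
end

section
/- Suppose each f_i is twice continuously differentiable and μ-strongly convex for some μ > 0. Let σ ∈ (0,1) and 0 < ε ≤ (1−σ)μ, let x ∈ ℝⁿ, and let d be a minimizer of φ_x. If ‖∇²f_i(x + s·d) − ∇²f_i(x)‖_op ≤ ε for all s ∈ [0,1] and all i ∈ [m], then F_i(x+d) − F_i(x) ≤ σ·θ(x) for every i ∈ [m]; i.e., the full step t = 1 satisfies the Armijo-type acceptance condition. -/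
open Filter Topology MeasureTheory
open scoped RealInnerProductSpace
open Set

lemma taylor_upper {E : Type*} [NormedAddCommGroup E] [InnerProductSpace ℝ E] [CompleteSpace E]
    (f : E → ℝ) (f' : E → E) (f'' : E → E →L[ℝ] E)
    (hgrad : ∀ y, HasGradientAt f (f' y) y) (hhess : ∀ y, HasFDerivAt f' (f'' y) y)
    (x d : E) (ε : ℝ)
    (hpert : ∀ s ∈ Set.Icc (0:ℝ) 1, ‖f'' (x + s • d) - f'' x‖ ≤ ε) :
    f (x + d) - f x ≤ ⟪f' x, d⟫ + (1/2) * ⟪d, f'' x d⟫ + ε/2 * ‖d‖^2 := by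
  set c : ℝ := ⟪d, f'' x d⟫ + ε * ‖d‖^2 with hc
  have hγ : ∀ s : ℝ, HasDerivAt (fun s : ℝ => x + s • d) d s := by
    intro s
    simpa using ((hasDerivAt_id s).smul_const d).const_add x
  have hk : ∀ s : ℝ, HasDerivAt (fun s : ℝ => ⟪f' (x + s • d), d⟫)
      ⟪f'' (x + s • d) d, d⟫ s := by
    intro s
    have h1 : HasDerivAt (fun s : ℝ => f' (x + s • d)) (f'' (x + s • d) d) s :=
      (hhess (x + s • d)).comp_hasDerivAt s (hγ s)
    simpa using (HasDerivAt.inner ℝ h1 (hasDerivAt_const s d))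
  have hmder : ∀ s : ℝ, HasDerivAt (fun s : ℝ => f (x + s • d)) ⟪f' (x + s • d), d⟫ s := by
    intro s
    have := ((hgrad (x + s • d)).hasFDerivAt).comp_hasDerivAt s (hγ s)
    simpa [InnerProductSpace.toDual_apply_apply, Function.comp_def] using this
  -- bound on derivative difference
  have hbd : ∀ s ∈ Icc (0:ℝ) 1, ⟪f'' (x + s • d) d, d⟫ ≤ c := by
    intro s hs
    have h1 : ⟪f'' (x + s • d) d - f'' x d, d⟫ ≤ ε * ‖d‖^2 := by
      calc ⟪f'' (x + s • d) d - f'' x d, d⟫ ≤ ‖f'' (x + s • d) d - f'' x d‖ * ‖d‖ :=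
            real_inner_le_norm _ _
        _ = ‖(f'' (x + s • d) - f'' x) d‖ * ‖d‖ := by simp
        _ ≤ (‖f'' (x + s • d) - f'' x‖ * ‖d‖) * ‖d‖ := by
            gcongr; exact (f'' (x + s • d) - f'' x).le_opNorm d
        _ ≤ (ε * ‖d‖) * ‖d‖ := by
            have h := hpert s hs
            have h0 := norm_nonneg d
            nlinarith [norm_nonneg (f'' (x + s • d) - f'' x)]
        _ = ε * ‖d‖^2 := by ring
    have h2 : ⟪f'' x d, d⟫ = ⟪d, f'' x d⟫ := real_inner_comm _ _
    have h3 := inner_sub_left (𝕜 := ℝ) (f'' (x + s • d) d) (f'' x d) d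
    rw [h3] at h1
    linarith
  -- step 1 : gradient bound
  have step1 : ∀ s ∈ Icc (0:ℝ) 1, ⟪f' (x + s • d), d⟫ ≤ ⟪f' x, d⟫ + s * c := by
    have hl : ∀ s : ℝ, HasDerivAt (fun s : ℝ => ⟪f' (x + s • d), d⟫ - s * c)
        (⟪f'' (x + s • d) d, d⟫ - c) s := by
      intro s
      simpa [Pi.sub_def] using (hk s).sub ((hasDerivAt_id s).mul_const c)
    have hanti : AntitoneOn (fun s : ℝ => ⟪f' (x + s • d), d⟫ - s * c) (Icc 0 1) := by
      apply antitoneOn_of_deriv_nonpos (convex_Icc 0 1)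
      · exact fun s _ => (hl s).continuousAt.continuousWithinAt
      · exact fun s _ => (hl s).differentiableAt.differentiableWithinAt
      · intro s hs
        rw [interior_Icc] at hs
        rw [(hl s).deriv]
        have := hbd s (Ioo_subset_Icc_self hs)
        linarith
    intro s hs
    have := hanti (left_mem_Icc.2 (by norm_num)) hs hs.1
    simp only [zero_smul, add_zero, zero_mul, sub_zero] at this
    linarith
  -- step 2
  have hh : ∀ s : ℝ, HasDerivAt
      (fun s : ℝ => f (x + s • d) - s * ⟪f' x, d⟫ - s^2 * (c/2))
      (⟪f' (x + s • d), d⟫ - ⟪f' x, d⟫ - s * c) s := by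
    intro s
    have h2 : HasDerivAt (fun s : ℝ => s^2 * (c/2)) (s * c) s := by
      have h := ((hasDerivAt_pow 2 s)).mul_const (c/2)
      convert h using 1
      · rfl
      · rfl
      · simp; ring
    simpa [Pi.sub_def] using ((hmder s).sub ((hasDerivAt_id s).mul_const ⟪f' x, d⟫)).sub h2
  have hanti2 : AntitoneOn (fun s : ℝ => f (x + s • d) - s * ⟪f' x, d⟫ - s^2 * (c/2)) (Icc 0 1) := by
    apply antitoneOn_of_deriv_nonpos (convex_Icc 0 1)
    · exact fun s _ => (hh s).continuousAt.continuousWithinAt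
    · exact fun s _ => (hh s).differentiableAt.differentiableWithinAt
    · intro s hs
      rw [interior_Icc] at hs
      rw [(hh s).deriv]
      have := step1 s (Ioo_subset_Icc_self hs)
      linarith
  have := hanti2 (left_mem_Icc.2 (by norm_num)) (right_mem_Icc.2 (by norm_num)) (by norm_num)
  simp only [one_smul, zero_smul, add_zero, one_pow, one_mul, zero_mul, sub_zero, zero_pow] at this
  norm_num at this
  linarith


theorem full_step_acceptance_near_limit
    {n m : ℕ} (hn : 0 < n) (hm : 0 < m) {μ : ℝ} (hμ : 0 < μ)
    (f g F : Fin m → EuclideanSpace ℝ (Fin n) → ℝ)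
    (f' : Fin m → EuclideanSpace ℝ (Fin n) → EuclideanSpace ℝ (Fin n))
    (f'' : Fin m → EuclideanSpace ℝ (Fin n) → (EuclideanSpace ℝ (Fin n) →L[ℝ] EuclideanSpace ℝ (Fin n)))
    (hgrad : ∀ i x, HasGradientAt (f i) (f' i x) x)
    (hhess : ∀ i x, HasFDerivAt (f' i) (f'' i x) x)
    (hcont : ∀ i, Continuous (f'' i))
    (hg : ∀ i, ConvexOn ℝ Set.univ (g i))
    (hF : ∀ i x, F i x = f i x + g i x)
    (hsc : ∀ i x u, μ * ‖u‖ ^ 2 ≤ ⟪u, f'' i x u⟫)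
    (φ : EuclideanSpace ℝ (Fin n) → EuclideanSpace ℝ (Fin n) → ℝ)
    (hφ : ∀ y e, φ y e = Finset.univ.sup' ⟨⟨0, hm⟩, Finset.mem_univ _⟩ fun i =>
      ⟪f' i y, e⟫ + g i (y + e) - g i y + (1/2) * ⟪e, f'' i y e⟫)
    (σ ε : ℝ) (hσ : 0 < σ ∧ σ < 1) (hε : 0 < ε ∧ ε ≤ (1 - σ) * μ)
    (x d : EuclideanSpace ℝ (Fin n)) (hd : ∀ e : EuclideanSpace ℝ (Fin n), φ x d ≤ φ x e)
    (hpert : ∀ i, ∀ s ∈ Set.Icc (0:ℝ) 1, ‖f'' i (x + s • d) - f'' i x‖ ≤ ε) :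
    ∀ i, F i (x + d) - F i x ≤ σ * φ x d := by
  obtain ⟨hσ1, hσ2⟩ := hσ
  obtain ⟨hε1, hε2⟩ := hε
  -- Step B : φ x d ≤ -(μ/2) ‖d‖²
  have hφd0 : ∀ t ∈ Set.Ioo (0:ℝ) 1, φ x d ≤ -(t * μ / 2) * ‖d‖^2 := by
    intro t ht
    obtain ⟨ht0, ht1⟩ := ht
    have key : φ x (t • d) ≤ t * φ x d + (t^2 - t)/2 * (μ * ‖d‖^2) := by
      rw [hφ]
      apply Finset.sup'_le
      intro i _
      have hterm_le : ⟪f' i x, d⟫ + g i (x + d) - g i x + (1/2) * ⟪d, f'' i x d⟫ ≤ φ x d := by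
        rw [hφ]
        exact Finset.le_sup'
          (fun j => ⟪f' j x, d⟫ + g j (x + d) - g j x + (1/2) * ⟪d, f'' j x d⟫)
          (Finset.mem_univ i)
      have hgconv : g i (x + t • d) ≤ (1 - t) * g i x + t * g i (x + d) := by
        have h := (hg i).2 (Set.mem_univ x) (Set.mem_univ (x + d))
          (show (0:ℝ) ≤ 1 - t by linarith) ht0.le (show (1 - t) + t = 1 by ring)
        have hx : (1 - t) • x + t • (x + d) = x + t • d := by
          rw [sub_smul, one_smul, smul_add]; abel
        rw [hx] at h
        simpa [smul_eq_mul] using h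
      have hq : ⟪t • d, f'' i x (t • d)⟫ = t^2 * ⟪d, f'' i x d⟫ := by
        rw [ContinuousLinearMap.map_smul, real_inner_smul_left, real_inner_smul_right]; ring
      have hinner : ⟪f' i x, t • d⟫ = t * ⟪f' i x, d⟫ := real_inner_smul_right _ _ _
      have hscd := hsc i x d
      rw [hinner, hq]
      have h1 : t * (⟪f' i x, d⟫ + g i (x + d) - g i x + (1/2) * ⟪d, f'' i x d⟫)
          ≤ t * φ x d := mul_le_mul_of_nonneg_left hterm_le ht0.le
      have h2 : (t - t^2)/2 * (μ * ‖d‖^2) ≤ (t - t^2)/2 * ⟪d, f'' i x d⟫ :=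
        mul_le_mul_of_nonneg_left hscd (by nlinarith)
      linarith
    have hmin := hd (t • d)
    have h1t : (0:ℝ) < 1 - t := by linarith
    have h2 : (1 - t) * φ x d ≤ (1 - t) * (-(t * μ / 2) * ‖d‖^2) := by nlinarith
    exact le_of_mul_le_mul_left h2 h1t
  have hB : φ x d ≤ -(μ/2) * ‖d‖^2 := by
    have htend : Tendsto (fun t : ℝ => -(t * μ / 2) * ‖d‖^2)
        (nhdsWithin 1 (Set.Iio 1)) (nhds (-(μ/2) * ‖d‖^2)) := by
      apply Tendsto.mono_left _ nhdsWithin_le_nhds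
      have hc : Continuous fun t : ℝ => -(t * μ / 2) * ‖d‖^2 := by fun_prop
      have := hc.tendsto 1
      simpa using this
    refine ge_of_tendsto htend ?_
    filter_upwards [Ioo_mem_nhdsLT_of_mem (a := (0:ℝ)) (Set.mem_Ioc.2 ⟨by norm_num, le_refl (1:ℝ)⟩)] with t ht
    exact hφd0 t ht
  intro i
  have hT := taylor_upper (f i) (f' i) (f'' i) (hgrad i) (hhess i) x d ε (hpert i)
  have hterm : ⟪f' i x, d⟫ + g i (x + d) - g i x + (1/2) * ⟪d, f'' i x d⟫ ≤ φ x d := by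
    rw [hφ]
    exact Finset.le_sup'
      (fun j => ⟪f' j x, d⟫ + g j (x + d) - g j x + (1/2) * ⟪d, f'' j x d⟫)
      (Finset.mem_univ i)
  have hεμ : ε/2 * ‖d‖^2 ≤ (1 - σ) * (μ/2 * ‖d‖^2) := by nlinarith [sq_nonneg ‖d‖]
  have h5 : (1 - σ) * (μ/2 * ‖d‖^2) ≤ (1 - σ) * (-(φ x d)) := by
    apply mul_le_mul_of_nonneg_left _ (by linarith)
    linarith
  rw [hF, hF]
  linarith
end

section
/- Suppose each f_i is twice continuously differentiable and μ-strongly convex for some μ > 0. Let x, d ∈ ℝⁿ and λ ∈ Δ_m satisfy −∇f_λ(x) − ∇²f_λ(x)d ∈ ∂g_λ(x+d), set x⁺ := x + d, and let x* ∈ ℝⁿ satisfy F_λ(x*) ≤ F_λ(x⁺). Let ε > 0 and assume ‖∇²f_λ(x + st(x⁺−x)) − ∇²f_λ(x)‖_op ≤ ε and ‖∇²f_λ(x + st(x*−x)) − ∇²f_λ(x)‖_op ≤ ε for all s, t ∈ [0,1]. Then μ‖x⁺ − x*‖² ≤ ε‖x⁺ − x‖² + ε‖x − x*‖². -/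
open Filter Topology MeasureTheory
open scoped RealInnerProductSpace

section Aux

open InnerProductSpace

variable {E : Type*} [NormedAddCommGroup E] [InnerProductSpace ℝ E] [CompleteSpace E]

private lemma path_hasDerivAt (x w : E) (t : ℝ) :
    HasDerivAt (fun s : ℝ => x + s • w) w t := by
  simpa using ((hasDerivAt_id t).smul_const w).const_add x

/-- Mean value step: the gradient is close to its linearization. -/
private lemma grad_mvt {φ' : E → E} {φ'' : E → E →L[ℝ] E}
    (hd : ∀ y, HasFDerivAt φ' (φ'' y) y)
    (x u : E) {ε : ℝ}
    (hp : ∀ s ∈ Set.Icc (0:ℝ) 1, ∀ t ∈ Set.Icc (0:ℝ) 1,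
      ‖φ'' (x + (s * t) • u) - φ'' x‖ ≤ ε)
    {t : ℝ} (ht : t ∈ Set.Icc (0:ℝ) 1) :
    ‖φ' (x + t • u) - φ' x - t • ((φ'' x) u)‖ ≤ (ε * ‖u‖) * t := by
  have hG' : ∀ s : ℝ, HasDerivAt (fun s : ℝ => φ' (x + (s * t) • u) - (s * t) • ((φ'' x) u))
      ((φ'' (x + (s * t) • u) - φ'' x) (t • u)) s := by
    intro s
    have h1 : HasDerivAt (fun s : ℝ => x + (s * t) • u) (t • u) s := by
      have := path_hasDerivAt x (t • u) s
      simpa [smul_smul] using this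
    have h2 : HasDerivAt (fun s : ℝ => φ' (x + (s * t) • u))
        ((φ'' (x + (s * t) • u)) (t • u)) s :=
      (hd _).comp_hasDerivAt s h1
    have h3 : HasDerivAt (fun s : ℝ => (s * t) • ((φ'' x) u)) (t • ((φ'' x) u)) s := by
      have := (hasDerivAt_id s).smul_const (t • ((φ'' x) u))
      simpa [smul_smul] using this
    have h4 : (φ'' (x + (s * t) • u) - φ'' x) (t • u)
        = (φ'' (x + (s * t) • u)) (t • u) - t • ((φ'' x) u) := by
      simp [ContinuousLinearMap.sub_apply, ContinuousLinearMap.map_smul, smul_sub]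
    rw [h4]
    exact h2.sub h3
  have bound : ∀ s ∈ Set.Ico (0:ℝ) 1,
      ‖(φ'' (x + (s * t) • u) - φ'' x) (t • u)‖ ≤ (ε * ‖u‖) * t := by
    intro s hs
    calc ‖(φ'' (x + (s * t) • u) - φ'' x) (t • u)‖
        ≤ ‖φ'' (x + (s * t) • u) - φ'' x‖ * ‖t • u‖ :=
          ContinuousLinearMap.le_opNorm _ _
      _ ≤ ε * ‖t • u‖ :=
          mul_le_mul_of_nonneg_right (hp s ⟨hs.1, hs.2.le⟩ t ht) (norm_nonneg _)
      _ = (ε * ‖u‖) * t := by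
          rw [norm_smul, Real.norm_eq_abs, abs_of_nonneg ht.1]; ring
  have hmv := norm_image_sub_le_of_norm_deriv_le_segment_01'
    (f := fun s : ℝ => φ' (x + (s * t) • u) - (s * t) • ((φ'' x) u))
    (f' := fun s : ℝ => (φ'' (x + (s * t) • u) - φ'' x) (t • u))
    (fun s _ => (hG' s).hasDerivWithinAt) bound
  simp only [one_mul, zero_mul, zero_smul, sub_zero, add_zero] at hmv
  calc ‖φ' (x + t • u) - φ' x - t • ((φ'' x) u)‖
      = ‖φ' (x + t • u) - t • ((φ'' x) u) - φ' x‖ := by rw [sub_right_comm]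
    _ ≤ (ε * ‖u‖) * t := hmv

/-- Second-order Taylor bound with perturbed Hessian. -/
private lemma taylor_bound {φ : E → ℝ} {φ' : E → E} {φ'' : E → E →L[ℝ] E}
    (hg : ∀ y, HasGradientAt φ (φ' y) y)
    (hd : ∀ y, HasFDerivAt φ' (φ'' y) y)
    (x u : E) {ε : ℝ}
    (hp : ∀ s ∈ Set.Icc (0:ℝ) 1, ∀ t ∈ Set.Icc (0:ℝ) 1,
      ‖φ'' (x + (s * t) • u) - φ'' x‖ ≤ ε) :
    |φ (x + u) - φ x - ⟪φ' x, u⟫ - (1/2) * ⟪(φ'' x) u, u⟫| ≤ ε / 2 * ‖u‖ ^ 2 := by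
  have hφ'd : Differentiable ℝ φ' := fun y => (hd y).differentiableAt
  have hφ'c : Continuous φ' := hφ'd.continuous
  have hpathc : Continuous (fun t : ℝ => x + t • u) :=
    continuous_const.add (continuous_id'.smul continuous_const)
  have hψ : ∀ t : ℝ, HasDerivAt (fun r : ℝ => φ (x + r • u)) ⟪φ' (x + t • u), u⟫ t := by
    intro t
    have := ((hg (x + t • u)).hasFDerivAt).comp_hasDerivAt t (path_hasDerivAt x u t)
    simp only [Function.comp_def, toDual_apply_apply] at this
    exact this
  have hψ'c : Continuous (fun t : ℝ => ⟪φ' (x + t • u), u⟫) :=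
    (hφ'c.comp hpathc).inner continuous_const
  have hFTC : ∫ t in (0:ℝ)..1, ⟪φ' (x + t • u), u⟫ = φ (x + u) - φ x := by
    have := intervalIntegral.integral_eq_sub_of_hasDerivAt (f := fun r : ℝ => φ (x + r • u))
      (fun t _ => hψ t) ((hψ'c).intervalIntegrable 0 1)
    simpa using this
  have hlinc : Continuous (fun t : ℝ => ⟪φ' x, u⟫ + t * ⟪(φ'' x) u, u⟫) :=
    continuous_const.add (continuous_id'.mul continuous_const)
  have hlin : ∫ t in (0:ℝ)..1, (⟪φ' x, u⟫ + t * ⟪(φ'' x) u, u⟫)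
      = ⟪φ' x, u⟫ + (1/2) * ⟪(φ'' x) u, u⟫ := by
    rw [intervalIntegral.integral_add (g := fun t : ℝ => t * ⟪(φ'' x) u, u⟫) intervalIntegrable_const
      ((continuous_id'.mul continuous_const).intervalIntegrable 0 1)]
    rw [intervalIntegral.integral_mul_const, intervalIntegral.integral_const, integral_id]
    norm_num
  have hdiffc : Continuous (fun t : ℝ => ⟪φ' (x + t • u), u⟫ - (⟪φ' x, u⟫ + t * ⟪(φ'' x) u, u⟫)) :=
    hψ'c.sub hlinc
  have hrepr : φ (x + u) - φ x - ⟪φ' x, u⟫ - (1/2) * ⟪(φ'' x) u, u⟫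
      = ∫ t in (0:ℝ)..1, (⟪φ' (x + t • u), u⟫ - (⟪φ' x, u⟫ + t * ⟪(φ'' x) u, u⟫)) := by
    rw [intervalIntegral.integral_sub (hψ'c.intervalIntegrable 0 1)
      (hlinc.intervalIntegrable 0 1), hFTC, hlin]
    ring
  have hptwise : ∀ t ∈ Set.Icc (0:ℝ) 1,
      |⟪φ' (x + t • u), u⟫ - (⟪φ' x, u⟫ + t * ⟪(φ'' x) u, u⟫)| ≤ (ε * ‖u‖ ^ 2) * t := by
    intro t ht
    have h1 : ⟪φ' (x + t • u), u⟫ - (⟪φ' x, u⟫ + t * ⟪(φ'' x) u, u⟫)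
        = ⟪φ' (x + t • u) - φ' x - t • ((φ'' x) u), u⟫ := by
      rw [inner_sub_left, inner_sub_left, real_inner_smul_left]; ring
    rw [h1]
    calc |⟪φ' (x + t • u) - φ' x - t • ((φ'' x) u), u⟫|
        ≤ ‖φ' (x + t • u) - φ' x - t • ((φ'' x) u)‖ * ‖u‖ := abs_real_inner_le_norm _ _
      _ ≤ ((ε * ‖u‖) * t) * ‖u‖ :=
          mul_le_mul_of_nonneg_right (grad_mvt hd x u hp ht) (norm_nonneg _)
      _ = (ε * ‖u‖ ^ 2) * t := by ring
  rw [hrepr]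
  calc |∫ t in (0:ℝ)..1, (⟪φ' (x + t • u), u⟫ - (⟪φ' x, u⟫ + t * ⟪(φ'' x) u, u⟫))|
      ≤ ∫ t in (0:ℝ)..1, |⟪φ' (x + t • u), u⟫ - (⟪φ' x, u⟫ + t * ⟪(φ'' x) u, u⟫)| :=
        intervalIntegral.abs_integral_le_integral_abs zero_le_one
    _ ≤ ∫ t in (0:ℝ)..1, (ε * ‖u‖ ^ 2) * t := by
        apply intervalIntegral.integral_mono_on zero_le_one
          ((hdiffc.abs).intervalIntegrable 0 1)
          ((continuous_const.mul continuous_id').intervalIntegrable 0 1)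
        exact hptwise
    _ = ε / 2 * ‖u‖ ^ 2 := by
        rw [intervalIntegral.integral_const_mul, integral_id]
        ring

/-- The map `toDual` as a genuinely `ℝ`-linear continuous map. -/
private noncomputable def TD (E : Type*) [NormedAddCommGroup E] [InnerProductSpace ℝ E]
    [CompleteSpace E] : E →L[ℝ] StrongDual ℝ E :=
  ⟨{ toFun := fun w => toDual ℝ E w
     map_add' := fun a b => by simp
     map_smul' := fun c a => by simp }, (toDual ℝ E).continuous⟩

private lemma TD_apply (w v : E) : TD E w v = ⟪w, v⟫ := by
  simp [TD, toDual_apply_apply]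

/-- Symmetry of the Hessian. -/
private lemma hess_symm {φ : E → ℝ} {φ' : E → E} {φ'' : E → E →L[ℝ] E}
    (hg : ∀ y, HasGradientAt φ (φ' y) y)
    (hd : ∀ y, HasFDerivAt φ' (φ'' y) y) (x u v : E) :
    ⟪(φ'' x) u, v⟫ = ⟪(φ'' x) v, u⟫ := by
  have key : ∀ y, HasFDerivAt φ ((fun y => TD E (φ' y)) y) y := by
    intro y
    have h := (hg y).hasFDerivAt
    have e : (toDual ℝ E) (φ' y) = TD E (φ' y) := by rfl
    rwa [e] at h
  have hx : HasFDerivAt (fun y => TD E (φ' y)) ((TD E).comp (φ'' x)) x :=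
    ((TD E).hasFDerivAt).comp x (hd x)
  have h2 := second_derivative_symmetric key hx u v
  have e1 : ((TD E).comp (φ'' x)) u v = ⟪(φ'' x) u, v⟫ := TD_apply _ _
  have e2 : ((TD E).comp (φ'' x)) v u = ⟪(φ'' x) v, u⟫ := TD_apply _ _
  rw [e1, e2] at h2
  exact h2

end Aux

set_option maxHeartbeats 2000000 in
theorem perturbed_hessian_contraction
    {n m : ℕ} (hn : 0 < n) (hm : 0 < m) {μ : ℝ} (hμ : 0 < μ)
    (f g F : Fin m → EuclideanSpace ℝ (Fin n) → ℝ)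
    (f' : Fin m → EuclideanSpace ℝ (Fin n) → EuclideanSpace ℝ (Fin n))
    (f'' : Fin m → EuclideanSpace ℝ (Fin n) → (EuclideanSpace ℝ (Fin n) →L[ℝ] EuclideanSpace ℝ (Fin n)))
    (hgrad : ∀ i x, HasGradientAt (f i) (f' i x) x)
    (hhess : ∀ i x, HasFDerivAt (f' i) (f'' i x) x)
    (hcont : ∀ i, Continuous (f'' i))
    (hg : ∀ i, ConvexOn ℝ Set.univ (g i))
    (hF : ∀ i x, F i x = f i x + g i x)
    (hsc : ∀ i x u, μ * ‖u‖ ^ 2 ≤ ⟪u, f'' i x u⟫)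
    (lam : Fin m → ℝ) (hlam : (∀ i, 0 ≤ lam i) ∧ ∑ i, lam i = 1)
    (Flam glam : EuclideanSpace ℝ (Fin n) → ℝ)
    (gradlam : EuclideanSpace ℝ (Fin n) → EuclideanSpace ℝ (Fin n))
    (Hlam : EuclideanSpace ℝ (Fin n) → (EuclideanSpace ℝ (Fin n) →L[ℝ] EuclideanSpace ℝ (Fin n)))
    (hFlam : ∀ y, Flam y = ∑ i, lam i * F i y)
    (hglam : ∀ y, glam y = ∑ i, lam i * g i y)
    (hgradlam : ∀ y, gradlam y = ∑ i, lam i • f' i y)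
    (hHlam : ∀ y, Hlam y = ∑ i, lam i • f'' i y)
    (x d : EuclideanSpace ℝ (Fin n)) (xp : EuclideanSpace ℝ (Fin n)) (hxp : xp = x + d)
    (hsub : ∀ z, glam z ≥ glam (x + d) + ⟪-gradlam x - (Hlam x) d, z - (x + d)⟫)
    (xs : EuclideanSpace ℝ (Fin n)) (hFs : Flam xs ≤ Flam xp)
    (ε : ℝ) (hε : 0 < ε)
    (hp1 : ∀ s ∈ Set.Icc (0:ℝ) 1, ∀ t ∈ Set.Icc (0:ℝ) 1,
      ‖Hlam (x + (s * t) • (xp - x)) - Hlam x‖ ≤ ε)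
    (hp2 : ∀ s ∈ Set.Icc (0:ℝ) 1, ∀ t ∈ Set.Icc (0:ℝ) 1,
      ‖Hlam (x + (s * t) • (xs - x)) - Hlam x‖ ≤ ε) :
    μ * ‖xp - xs‖ ^ 2 ≤ ε * ‖xp - x‖ ^ 2 + ε * ‖x - xs‖ ^ 2 := by
  classical
  set flam : EuclideanSpace ℝ (Fin n) → ℝ := fun y => ∑ i, lam i * f i y with hflamdef
  -- gradient of flam
  have hgrad1 : ∀ y, HasGradientAt flam (gradlam y) y := by
    intro y
    rw [hasGradientAt_iff_hasFDerivAt, hgradlam]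
    have : HasFDerivAt flam (∑ i, lam i • (InnerProductSpace.toDual ℝ _ (f' i y))) y :=
      HasFDerivAt.fun_sum (fun i _ => ((hgrad i y).hasFDerivAt).const_mul (lam i))
    refine this.congr_fderiv ?_
    ext v
    simp [ContinuousLinearMap.sum_apply, sum_inner, real_inner_smul_left,
      InnerProductSpace.toDual_apply_apply]
  -- derivative of gradlam
  have hgradfun : gradlam = fun y => ∑ i, lam i • f' i y := funext hgradlam
  have hhess1 : ∀ y, HasFDerivAt gradlam (Hlam y) y := by
    intro y
    rw [hgradfun, hHlam]
    exact HasFDerivAt.fun_sum (fun i _ => (hhess i y).const_smul (lam i))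
  -- splitting Flam
  have hsplit : ∀ y, Flam y = flam y + glam y := by
    intro y
    rw [hFlam, hglam, hflamdef, ← Finset.sum_add_distrib]
    exact Finset.sum_congr rfl fun i _ => by rw [hF]; ring
  -- strong convexity of Hlam x
  have hscl : ∀ w, μ * ‖w‖ ^ 2 ≤ ⟪w, (Hlam x) w⟫ := by
    intro w
    have h1 : ⟪w, (Hlam x) w⟫ = ∑ i, lam i * ⟪w, (f'' i x) w⟫ := by
      rw [hHlam]
      simp only [ContinuousLinearMap.sum_apply, ContinuousLinearMap.coe_smul',
        Pi.smul_apply, inner_sum, real_inner_smul_right]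
    have h2 : ∑ i, lam i * (μ * ‖w‖ ^ 2) ≤ ∑ i, lam i * ⟪w, (f'' i x) w⟫ :=
      Finset.sum_le_sum fun i _ => mul_le_mul_of_nonneg_left (hsc i x w) (hlam.1 i)
    have h3 : ∑ i, lam i * (μ * ‖w‖ ^ 2) = μ * ‖w‖ ^ 2 := by
      rw [← Finset.sum_mul, hlam.2, one_mul]
    rw [h1]
    linarith [h3 ▸ h2]
  -- auxiliary equalities
  have hda : d = xp - x := by rw [hxp]; abel
  have hxa : x + (xp - x) = xp := by abel
  have hxb : x + (xs - x) = xs := by abel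
  -- Taylor bounds
  have T1 := taylor_bound hgrad1 hhess1 x (xp - x) hp1
  have T2 := taylor_bound hgrad1 hhess1 x (xs - x) hp2
  rw [hxa] at T1
  rw [hxb] at T2
  rw [abs_le] at T1 T2
  -- symmetry
  have hsym := hess_symm hgrad1 hhess1 x (xp - x) (xs - x)
  -- subgradient inequality
  have S := hsub xs
  rw [← hxp] at S
  rw [hda] at S
  -- strong convexity applied to xs - xp
  have Q := hscl (xs - xp)
  have hq : xs - xp = (xs - x) - (xp - x) := by abel
  rw [hq] at Q
  -- inner product commutations
  have c1 := real_inner_comm xs ((Hlam x) xs)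
  have c2 := real_inner_comm xs ((Hlam x) xp)
  have c3 := real_inner_comm xp ((Hlam x) xs)
  have c4 := real_inner_comm xp ((Hlam x) xp)
  have c5 := real_inner_comm xs ((Hlam x) x)
  have c6 := real_inner_comm xp ((Hlam x) x)
  have c7 := real_inner_comm x ((Hlam x) xs)
  have c8 := real_inner_comm x ((Hlam x) xp)
  have c9 := real_inner_comm x ((Hlam x) x)
  -- expand everything into atomic inner products
  simp only [map_sub, inner_sub_left, inner_sub_right, inner_neg_left] at S Q T1 T2 hsym
  -- rewrite norms
  have hn1 : ‖xp - xs‖ = ‖xs - xp‖ := norm_sub_rev _ _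
  have hn2 : ‖x - xs‖ = ‖xs - x‖ := norm_sub_rev _ _
  have hn3 : ‖(xs - x) - (xp - x)‖ = ‖xs - xp‖ := by rw [← hq]
  rw [hn1, hn2]
  rw [hn3] at Q
  -- combine
  have hFp := hsplit xp
  have hFsp := hsplit xs
  rw [hFp, hFsp] at hFs
  linarith [T1.1, T1.2, T2.1, T2.2, S, Q, hsym, hFs, c1, c2, c3, c4, c5, c6, c7, c8, c9]
end

section
/- Let μ > ε > 0 and let x, x⁺, x* ∈ ℝⁿ with x ≠ x* satisfy μ‖x⁺ − x*‖² ≤ ε‖x⁺ − x‖² + ε‖x − x*‖². Then τ := ‖x⁺ − x‖ / ‖x − x*‖ satisfies (μ−ε)τ² − 2μτ + (μ−ε) ≤ 0, hence (μ − √(2με − ε²))/(μ−ε) ≤ τ ≤ (μ + √(2με − ε²))/(μ−ε), and moreover ‖x⁺ − x*‖ ≤ √(ε(1+τ²)/μ) · ‖x − x*‖. -/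
open Filter Topology MeasureTheory
open scoped RealInnerProductSpace

theorem tau_bounds_and_contraction
    {n : ℕ} (hn : 0 < n) {μ ε : ℝ} (hε : 0 < ε) (hεμ : ε < μ)
    (x xp xs : EuclideanSpace ℝ (Fin n)) (hne : x ≠ xs)
    (h : μ * ‖xp - xs‖ ^ 2 ≤ ε * ‖xp - x‖ ^ 2 + ε * ‖x - xs‖ ^ 2) :
    (μ - ε) * (‖xp - x‖ / ‖x - xs‖) ^ 2 - 2 * μ * (‖xp - x‖ / ‖x - xs‖) + (μ - ε) ≤ 0 ∧
    (μ - Real.sqrt (2 * μ * ε - ε ^ 2)) / (μ - ε) ≤ ‖xp - x‖ / ‖x - xs‖ ∧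
    ‖xp - x‖ / ‖x - xs‖ ≤ (μ + Real.sqrt (2 * μ * ε - ε ^ 2)) / (μ - ε) ∧
    ‖xp - xs‖ ≤ Real.sqrt (ε * (1 + (‖xp - x‖ / ‖x - xs‖) ^ 2) / μ) * ‖x - xs‖ := by
  set a := ‖xp - x‖ with ha_def
  set b := ‖x - xs‖ with hb_def
  set c := ‖xp - xs‖ with hc_def
  have hb : 0 < b := by
    rw [hb_def, norm_pos_iff]
    exact sub_ne_zero.mpr hne
  have ha : 0 ≤ a := norm_nonneg _
  have hc : 0 ≤ c := norm_nonneg _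
  have hμε : 0 < μ - ε := sub_pos.mpr hεμ
  have hμ : 0 < μ := hε.trans hεμ
  -- triangle inequalities
  have htri1 : b ≤ a + c := by
    have h1 := norm_sub_le_norm_sub_add_norm_sub x xp xs
    rw [norm_sub_rev x xp] at h1
    exact h1
  have htri2 : a ≤ c + b := by
    have h1 := norm_sub_le_norm_sub_add_norm_sub xp xs x
    rw [norm_sub_rev xs x] at h1
    exact h1
  have hsq : (a - b) ^ 2 ≤ c ^ 2 := by nlinarith
  have key : (μ - ε) * a ^ 2 - 2 * μ * (a * b) + (μ - ε) * b ^ 2 ≤ 0 := by nlinarith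
  set τ := a / b with hτ_def
  have haτ : a = τ * b := by rw [hτ_def, div_mul_cancel₀ a hb.ne']
  have hb2 : 0 < b ^ 2 := by positivity
  rw [haτ] at key h
  clear_value a b c τ
  clear hne ha_def hb_def hc_def hτ_def htri1 htri2 hsq x xp xs
  have hq : (μ - ε) * τ ^ 2 - 2 * μ * τ + (μ - ε) ≤ 0 := by
    have h0 : ((μ - ε) * τ ^ 2 - 2 * μ * τ + (μ - ε)) * b ^ 2 ≤ 0 * b ^ 2 := by nlinarith [key]
    exact le_of_mul_le_mul_right h0 hb2
  have h1 : ((μ - ε) * τ - μ) ^ 2 ≤ 2 * μ * ε - ε ^ 2 := by nlinarith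
  have h2 : |(μ - ε) * τ - μ| ≤ Real.sqrt (2 * μ * ε - ε ^ 2) := by
    have h3 := Real.sqrt_le_sqrt h1
    rwa [Real.sqrt_sq_eq_abs] at h3
  refine ⟨hq, ?_, ?_, ?_⟩
  · have h3 := (abs_le.mp h2).1
    rw [div_le_iff₀ hμε]
    nlinarith
  · have h3 := (abs_le.mp h2).2
    rw [le_div_iff₀ hμε]
    nlinarith
  · have harg : 0 ≤ ε * (1 + τ ^ 2) / μ := by positivity
    have hc2 : c ^ 2 ≤ ε * (1 + τ ^ 2) / μ * b ^ 2 := by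
      rw [div_mul_eq_mul_div, le_div_iff₀ hμ]
      nlinarith [h]
    calc c = Real.sqrt (c ^ 2) := (Real.sqrt_sq hc).symm
      _ ≤ Real.sqrt (ε * (1 + τ ^ 2) / μ * b ^ 2) := Real.sqrt_le_sqrt hc2
      _ = Real.sqrt (ε * (1 + τ ^ 2) / μ) * b := by
          rw [Real.sqrt_mul harg, Real.sqrt_sq hb.le]
end

section
/- Suppose each f_i is twice continuously differentiable and μ-strongly convex for some μ > 0, and each Hessian ∇²f_i is Lipschitz continuous with constant L₂ (‖∇²f_i(u) − ∇²f_i(v)‖_op ≤ L₂‖u−v‖ for all u, v). Let x, d ∈ ℝⁿ and λ ∈ Δ_m satisfy −∇f_λ(x) − ∇²f_λ(x)d ∈ ∂g_λ(x+d), set x⁺ := x + d, and let x* ∈ ℝⁿ satisfy F_λ(x*) ≤ F_λ(x⁺) and x ≠ x*. Let τ := ‖x⁺ − x‖/‖x − x*‖ and assume 3μ − τL₂‖x − x*‖ > 0. Then ‖x⁺ − x*‖ ≤ ((2τ+1)L₂ / (3μ − τL₂‖x − x*‖)) · ‖x − x*‖². -/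
open Filter Topology MeasureTheory intervalIntegral
open scoped RealInnerProductSpace

lemma taylor_grad_aux {n : ℕ} (L : ℝ)
    (G : EuclideanSpace ℝ (Fin n) → EuclideanSpace ℝ (Fin n))
    (H : EuclideanSpace ℝ (Fin n) → (EuclideanSpace ℝ (Fin n) →L[ℝ] EuclideanSpace ℝ (Fin n)))
    (hG : ∀ y, HasFDerivAt G (H y) y)
    (hHc : Continuous H)
    (hL : 0 ≤ L)
    (hLip : ∀ u v, ‖H u - H v‖ ≤ L * ‖u - v‖)
    (a b : EuclideanSpace ℝ (Fin n)) :
    ‖G b - G a - H a (b - a)‖ ≤ L / 2 * ‖b - a‖ ^ 2 := by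
  set u := b - a with hu
  have hpath : ∀ t : ℝ, HasDerivAt (fun t : ℝ => a + t • u) u t := by
    intro t
    simpa using ((hasDerivAt_id t).smul_const u).const_add a
  have hψ : ∀ t : ℝ, HasDerivAt (fun t : ℝ => G (a + t • u)) (H (a + t • u) u) t := by
    intro t
    exact (hG (a + t • u)).comp_hasDerivAt t (hpath t)
  have hcont : Continuous fun t : ℝ => H (a + t • u) u := by
    exact (hHc.comp (continuous_const.add (continuous_id.smul continuous_const))).clm_apply continuous_const
  have hftc : ∫ t in (0:ℝ)..1, H (a + t • u) u = G b - G a := by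
    rw [integral_eq_sub_of_hasDerivAt (fun t _ => hψ t) (hcont.intervalIntegrable 0 1)]
    simp [hu]
  have hsplit : G b - G a - H a u = ∫ t in (0:ℝ)..1, (H (a + t • u) u - H a u) := by
    rw [integral_sub (hcont.intervalIntegrable 0 1)
      ((continuous_const (y := H a u)).intervalIntegrable 0 1), hftc]
    simp
  rw [hsplit]
  have hbound : ∀ t ∈ Set.uIoc (0:ℝ) 1, ‖H (a + t • u) u - H a u‖ ≤ L * t * ‖u‖ ^ 2 := by
    intro t ht
    rw [Set.uIoc_of_le (by norm_num)] at ht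
    have h1 : ‖H (a + t • u) u - H a u‖ ≤ ‖H (a + t • u) - H a‖ * ‖u‖ := by
      have h0 := (H (a + t • u) - H a).le_opNorm u
      rwa [ContinuousLinearMap.sub_apply] at h0
    have h2 : ‖H (a + t • u) - H a‖ ≤ L * (t * ‖u‖) := by
      have h0 := hLip (a + t • u) a
      have h3 : a + t • u - a = t • u := by abel
      rwa [h3, norm_smul, Real.norm_eq_abs, abs_of_nonneg ht.1.le] at h0
    calc ‖H (a + t • u) u - H a u‖ ≤ (L * (t * ‖u‖)) * ‖u‖ :=
          h1.trans (by
            apply mul_le_mul_of_nonneg_right h2 (norm_nonneg u))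
      _ = L * t * ‖u‖ ^ 2 := by ring
  have := intervalIntegral.norm_integral_le_abs_of_norm_le (g := fun t => L * t * ‖u‖ ^ 2)
    (μ := volume) (a := 0) (b := 1) (f := fun t => H (a + t • u) u - H a u)
    ((ae_restrict_iff' measurableSet_uIoc).2 (Filter.Eventually.of_forall hbound))
    (((continuous_const.mul continuous_id).mul continuous_const).intervalIntegrable 0 1)
  refine this.trans (le_of_eq ?_)
  have : ∫ t in (0:ℝ)..1, L * t * ‖u‖ ^ 2 = (∫ t in (0:ℝ)..1, t) * (L * ‖u‖ ^ 2) := by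
    rw [← intervalIntegral.integral_mul_const]
    congr 1; ext t; ring
  rw [this, integral_id]
  rw [abs_of_nonneg (by positivity)]
  ring

set_option maxHeartbeats 1000000 in
theorem quadratic_rate_one_step
    {n m : ℕ} (hn : 0 < n) (hm : 0 < m) {μ L₂ : ℝ} (hμ : 0 < μ)
    (f g F : Fin m → EuclideanSpace ℝ (Fin n) → ℝ)
    (f' : Fin m → EuclideanSpace ℝ (Fin n) → EuclideanSpace ℝ (Fin n))
    (f'' : Fin m → EuclideanSpace ℝ (Fin n) → (EuclideanSpace ℝ (Fin n) →L[ℝ] EuclideanSpace ℝ (Fin n)))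
    (hgrad : ∀ i x, HasGradientAt (f i) (f' i x) x)
    (hhess : ∀ i x, HasFDerivAt (f' i) (f'' i x) x)
    (hcont : ∀ i, Continuous (f'' i))
    (hg : ∀ i, ConvexOn ℝ Set.univ (g i))
    (hF : ∀ i x, F i x = f i x + g i x)
    (hsc : ∀ i x u, μ * ‖u‖ ^ 2 ≤ ⟪u, f'' i x u⟫)
    (hL2 : ∀ i u v, ‖f'' i u - f'' i v‖ ≤ L₂ * ‖u - v‖)
    (lam : Fin m → ℝ) (hlam : (∀ i, 0 ≤ lam i) ∧ ∑ i, lam i = 1)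
    (Flam glam : EuclideanSpace ℝ (Fin n) → ℝ)
    (gradlam : EuclideanSpace ℝ (Fin n) → EuclideanSpace ℝ (Fin n))
    (Hlam : EuclideanSpace ℝ (Fin n) → (EuclideanSpace ℝ (Fin n) →L[ℝ] EuclideanSpace ℝ (Fin n)))
    (hFlam : ∀ y, Flam y = ∑ i, lam i * F i y)
    (hglam : ∀ y, glam y = ∑ i, lam i * g i y)
    (hgradlam : ∀ y, gradlam y = ∑ i, lam i • f' i y)
    (hHlam : ∀ y, Hlam y = ∑ i, lam i • f'' i y)
    (x d : EuclideanSpace ℝ (Fin n)) (xp : EuclideanSpace ℝ (Fin n)) (hxp : xp = x + d)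
    (hsub : ∀ z, glam z ≥ glam (x + d) + ⟪-gradlam x - (Hlam x) d, z - (x + d)⟫)
    (xs : EuclideanSpace ℝ (Fin n)) (hFs : Flam xs ≤ Flam xp) (hne : x ≠ xs)
    (τ : ℝ) (hτ : τ = ‖xp - x‖ / ‖x - xs‖)
    (hden : 0 < 3 * μ - τ * L₂ * ‖x - xs‖) :
    ‖xp - xs‖ ≤ ((2 * τ + 1) * L₂ / (3 * μ - τ * L₂ * ‖x - xs‖)) * ‖x - xs‖ ^ 2 := by
  obtain ⟨hlam0, hlam1⟩ := hlam
  set e := xp - xs with he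
  set r := x - xs with hr
  have hd : d = e - r := by rw [he, hr, hxp]; abel
  have hρ : 0 < ‖r‖ := norm_pos_iff.mpr (sub_ne_zero.mpr hne)
  have hdn : xp - x = d := by rw [hxp]; abel
  have hτ0 : 0 ≤ τ := by rw [hτ]; positivity
  have hτd : ‖d‖ = τ * ‖r‖ := by
    rw [hτ, hdn]
    field_simp
  -- L₂ nonneg
  have hL2nn : 0 ≤ L₂ := by
    have h1 := hL2 ⟨0, hm⟩ (EuclideanSpace.single ⟨0, hn⟩ (1:ℝ)) 0
    rw [sub_zero, EuclideanSpace.norm_single] at h1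
    rw [norm_one, mul_one] at h1
    exact le_trans (norm_nonneg _) h1
  -- flam
  set flam : EuclideanSpace ℝ (Fin n) → ℝ := fun y => ∑ i, lam i * f i y with hflam
  have hFsplit : ∀ y, Flam y = flam y + glam y := by
    intro y
    rw [hFlam, hglam, hflam, ← Finset.sum_add_distrib]
    exact Finset.sum_congr rfl fun i _ => by rw [hF]; ring
  -- gradient of flam
  have hgradflam : ∀ y, HasFDerivAt flam ((InnerProductSpace.toDual ℝ _) (gradlam y)) y := by
    intro y
    have h : HasFDerivAt flam (∑ i, lam i • ((InnerProductSpace.toDual ℝ _) (f' i y))) y :=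
      HasFDerivAt.fun_sum fun i _ => ((hgrad i y).hasFDerivAt).const_mul (lam i)
    have h2 : (InnerProductSpace.toDual ℝ (EuclideanSpace ℝ (Fin n))) (gradlam y)
        = ∑ i, lam i • ((InnerProductSpace.toDual ℝ _) (f' i y)) := by
      refine ContinuousLinearMap.ext fun w => ?_
      rw [InnerProductSpace.toDual_apply_apply, ContinuousLinearMap.sum_apply, hgradlam, sum_inner]
      refine Finset.sum_congr rfl fun i _ => ?_
      rw [ContinuousLinearMap.smul_apply, InnerProductSpace.toDual_apply_apply,
        real_inner_smul_left, smul_eq_mul]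
    rwa [h2]
  -- continuity of gradlam
  have hf'cont : ∀ i, Continuous (f' i) := by
    intro i
    have hdiff : Differentiable ℝ (f' i) := fun y => (hhess i y).differentiableAt
    exact hdiff.continuous
  have hgeq : gradlam = fun y => ∑ i, lam i • f' i y := funext hgradlam
  have hgradcont : Continuous gradlam := by
    rw [hgeq]
    exact continuous_finset_sum _ fun i _ => (hf'cont i).fun_const_smul _
  -- Hlam as derivative of gradlam
  have hHeq : Hlam = fun y => ∑ i, lam i • f'' i y := funext hHlam
  have hHfd : ∀ y, HasFDerivAt gradlam (Hlam y) y := by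
    intro y
    rw [hgeq, hHlam]
    exact HasFDerivAt.fun_sum fun i _ => (hhess i y).const_smul (lam i)
  have hHcont : Continuous Hlam := by
    rw [hHeq]
    exact continuous_finset_sum _ fun i _ => (hcont i).fun_const_smul _
  -- Hlam Lipschitz
  have hHlip : ∀ u v, ‖Hlam u - Hlam v‖ ≤ L₂ * ‖u - v‖ := by
    intro u v
    rw [hHlam u, hHlam v, ← Finset.sum_sub_distrib]
    have hterm : ∀ i : Fin m, ‖lam i • f'' i u - lam i • f'' i v‖ ≤ lam i * (L₂ * ‖u - v‖) := by
      intro i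
      have h9 : lam i • f'' i u - lam i • f'' i v = lam i • (f'' i u - f'' i v) := by
        rw [smul_sub]
      rw [h9]
      refine (norm_smul_le (lam i) (f'' i u - f'' i v)).trans ?_
      rw [Real.norm_eq_abs, abs_of_nonneg (hlam0 i)]
      exact mul_le_mul_of_nonneg_left (hL2 i u v) (hlam0 i)
    calc ‖∑ i, (lam i • f'' i u - lam i • f'' i v)‖ ≤ ∑ i, ‖lam i • f'' i u - lam i • f'' i v‖ :=
          norm_sum_le _ _
      _ ≤ ∑ i, lam i * (L₂ * ‖u - v‖) := Finset.sum_le_sum fun i _ => hterm i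
      _ = L₂ * ‖u - v‖ := by rw [← Finset.sum_mul, hlam1, one_mul]
  have htay : ∀ a b, ‖gradlam b - gradlam a - Hlam a (b - a)‖ ≤ L₂ / 2 * ‖b - a‖ ^ 2 :=
    taylor_grad_aux L₂ gradlam Hlam hHfd hHcont hL2nn hHlip
  -- the subgradient-optimality inequality
  have hstar : ⟪gradlam x + Hlam x d, e⟫ ≤ flam xp - flam xs := by
    have h1 := hsub xs
    rw [← hxp] at h1
    have h4 : ⟪-gradlam x - (Hlam x) d, xs - xp⟫ = ⟪gradlam x + (Hlam x) d, e⟫ := by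
      rw [show -gradlam x - (Hlam x) d = -(gradlam x + (Hlam x) d) from by abel,
        show xs - xp = -e from by rw [he]; abel, inner_neg_neg]
    rw [h4] at h1
    have h2 := hFs
    rw [hFsplit, hFsplit] at h2
    linarith
  -- derivative of t ↦ flam (xs + t • e)
  have hγ : ∀ t : ℝ, HasDerivAt (fun t : ℝ => xs + t • e) e t := by
    intro t
    simpa using ((hasDerivAt_id t).smul_const e).const_add xs
  have hφ : ∀ t : ℝ, HasDerivAt (fun t : ℝ => flam (xs + t • e)) ⟪gradlam (xs + t • e), e⟫ t := by
    intro t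
    have h := (hgradflam (xs + t • e)).comp_hasDerivAt t (hγ t)
    simpa [InnerProductSpace.toDual_apply_apply, Function.comp_def] using h
  have hφcont : Continuous fun t : ℝ => ⟪gradlam (xs + t • e), e⟫ :=
    Continuous.inner (hgradcont.comp (continuous_const.add (continuous_id.smul continuous_const)))
      continuous_const
  have hftc : flam xp - flam xs = ∫ t in (0:ℝ)..1, ⟪gradlam (xs + t • e), e⟫ := by
    rw [integral_eq_sub_of_hasDerivAt (fun t _ => hφ t) (hφcont.intervalIntegrable 0 1)]
    have h1 : xs + (1:ℝ) • e = xp := by rw [one_smul, he]; abel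
    have h0 : xs + (0:ℝ) • e = xs := by rw [zero_smul, add_zero]
    simp only [h1, h0]
  -- pointwise upper bound
  set c0 : ℝ := ⟪gradlam x, e⟫ - ⟪Hlam x r, e⟫ + L₂/2 * ‖r‖^2 * ‖e‖ with hc0
  set c1 : ℝ := ⟪Hlam x e, e⟫ - L₂ * ⟪e, r⟫ * ‖e‖ with hc1
  set c2 : ℝ := L₂/2 * ‖e‖^3 with hc2
  have hpt : ∀ t ∈ Set.Icc (0:ℝ) 1, ⟪gradlam (xs + t • e), e⟫ ≤ c0 + c1 * t + c2 * t^2 := by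
    intro t _
    have hw : xs + t • e - x = t • e - r := by rw [hr]; abel
    have hR := htay x (xs + t • e)
    rw [hw] at hR
    have hRb : ⟪gradlam (xs + t • e) - gradlam x - Hlam x (t • e - r), e⟫
        ≤ (L₂ / 2 * ‖t • e - r‖ ^ 2) * ‖e‖ :=
      (real_inner_le_norm _ _).trans (mul_le_mul_of_nonneg_right hR (norm_nonneg e))
    have hsplit : ⟪gradlam (xs + t • e), e⟫
        = ⟪gradlam x, e⟫ + ⟪Hlam x (t • e - r), e⟫
          + ⟪gradlam (xs + t • e) - gradlam x - Hlam x (t • e - r), e⟫ := by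
      rw [← inner_add_left, ← inner_add_left]
      congr 1
      abel
    have hHx : ⟪Hlam x (t • e - r), e⟫ = t * ⟪Hlam x e, e⟫ - ⟪Hlam x r, e⟫ := by
      rw [map_sub, (Hlam x).map_smul, inner_sub_left, real_inner_smul_left]
    have hnorm : ‖t • e - r‖ ^ 2 = t^2 * ‖e‖^2 - 2 * t * ⟪e, r⟫ + ‖r‖^2 := by
      rw [norm_sub_sq_real, real_inner_smul_left, norm_smul, Real.norm_eq_abs, mul_pow, sq_abs]
      ring
    rw [hsplit, hHx]
    rw [hnorm] at hRb
    rw [hc0, hc1, hc2]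
    linarith [hRb]
  -- integral of the polynomial bound
  have hpoly : ∫ t in (0:ℝ)..1, (c0 + c1 * t + c2 * t^2) = c0 + c1/2 + c2/3 := by
    have i1 : IntervalIntegrable (fun t : ℝ => c0 + c1 * t) volume 0 1 := by
      apply Continuous.intervalIntegrable
      exact continuous_const.add (continuous_const.mul continuous_id)
    have i2 : IntervalIntegrable (fun t : ℝ => c2 * t^2) volume 0 1 := by
      apply Continuous.intervalIntegrable
      exact continuous_const.mul (continuous_pow 2)
    have i0 : IntervalIntegrable (fun _ : ℝ => c0) volume 0 1 := intervalIntegrable_const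
    have i3 : IntervalIntegrable (fun t : ℝ => c1 * t) volume 0 1 := by
      apply Continuous.intervalIntegrable
      exact continuous_const.mul continuous_id
    rw [integral_add i1 i2, integral_add i0 i3,
      _root_.intervalIntegral.integral_const, intervalIntegral.integral_const_mul, intervalIntegral.integral_const_mul,
      integral_id, integral_pow]
    rw [smul_eq_mul]
    ring
  have hmono : flam xp - flam xs ≤ c0 + c1/2 + c2/3 := by
    rw [hftc, ← hpoly]
    apply integral_mono_on (by norm_num) (hφcont.intervalIntegrable 0 1)
      (((continuous_const.add (continuous_const.mul continuous_id)).add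
        (continuous_const.mul (continuous_pow 2))).intervalIntegrable 0 1) hpt
  -- strong convexity
  have hscl : μ * ‖e‖^2 ≤ ⟪e, Hlam x e⟫ := by
    rw [hHlam]
    have hsum : ⟪e, (∑ i, lam i • f'' i x) e⟫ = ∑ i, lam i * ⟪e, f'' i x e⟫ := by
      rw [ContinuousLinearMap.sum_apply, inner_sum]
      exact Finset.sum_congr rfl fun i _ => by
        rw [ContinuousLinearMap.smul_apply, real_inner_smul_right]
    rw [hsum]
    calc μ * ‖e‖^2 = ∑ i, lam i * (μ * ‖e‖^2) := by rw [← Finset.sum_mul, hlam1, one_mul]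
      _ ≤ ∑ i, lam i * ⟪e, f'' i x e⟫ :=
        Finset.sum_le_sum fun i _ => mul_le_mul_of_nonneg_left (hsc i x e) (hlam0 i)
  -- combine: KEY inequality
  have hHde : ⟪Hlam x d, e⟫ = ⟪Hlam x e, e⟫ - ⟪Hlam x r, e⟫ := by
    rw [hd, map_sub, inner_sub_left]
  have hkey : μ * ‖e‖^2 ≤ L₂ * ‖e‖ * (‖e‖^2/3 - ⟪e, r⟫ + ‖r‖^2) := by
    have h5 : ⟪gradlam x, e⟫ + ⟪Hlam x d, e⟫ ≤ flam xp - flam xs := by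
      rw [← inner_add_left]; exact hstar
    have h6 := hmono
    rw [hc0, hc1, hc2] at h6
    have h7 : ⟪e, Hlam x e⟫ = ⟪Hlam x e, e⟫ := real_inner_comm _ _
    linarith [hscl, h5, h6, hHde]
  -- final algebra
  rw [div_mul_eq_mul_div, le_div_iff₀ hden]
  rcases eq_or_lt_of_le (norm_nonneg e) with hE0 | hEpos
  · rw [← hE0]
    ring_nf
    nlinarith [mul_nonneg (mul_nonneg hτ0 hL2nn) (sq_nonneg ‖r‖),
      mul_nonneg hL2nn (sq_nonneg ‖r‖)]
  · have h1 : μ * ‖e‖ ≤ L₂ * (‖e‖^2/3 - ⟪e, r⟫ + ‖r‖^2) := by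
      have h := hkey
      have := le_of_mul_le_mul_right (by nlinarith [h] : μ * ‖e‖ * ‖e‖ ≤ (L₂ * (‖e‖^2/3 - ⟪e, r⟫ + ‖r‖^2)) * ‖e‖) hEpos
      linarith
    have hE2 : ‖e‖^2 = ‖d‖^2 + 2 * ⟪d, r⟫ + ‖r‖^2 := by
      rw [show e = d + r from by rw [hd]; abel, norm_add_sq_real]
    have hier : ⟪e, r⟫ = ⟪d, r⟫ + ‖r‖^2 := by
      rw [show e = d + r from by rw [hd]; abel, inner_add_left, real_inner_self_eq_norm_sq]
    have h1' : μ * ‖e‖ ≤ L₂ * ((τ^2 * ‖r‖^2 - ⟪d, r⟫ + ‖r‖^2)/3) := by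
      have hexp : ‖e‖^2/3 - ⟪e, r⟫ + ‖r‖^2 = (τ^2 * ‖r‖^2 - ⟪d, r⟫ + ‖r‖^2)/3 := by
        have hd2 : ‖d‖^2 = τ^2 * ‖r‖^2 := by rw [hτd]; ring
        rw [hE2, hier, hd2]; ring
      rwa [hexp] at h1
    have hCS : -(τ * ‖r‖ * ‖r‖) ≤ ⟪d, r⟫ := by
      have := abs_real_inner_le_norm d r
      rw [hτd] at this
      have := neg_le_of_abs_le this
      linarith
    have htri : τ * ‖r‖ - ‖r‖ ≤ ‖e‖ := by
      have h8 : ‖d‖ ≤ ‖e‖ + ‖r‖ := by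
        rw [hd]; exact norm_sub_le _ _
      rw [hτd] at h8
      linarith
    have h2 : 0 ≤ L₂ * (⟪d, r⟫ + τ * ‖r‖ * ‖r‖) := mul_nonneg hL2nn (by linarith)
    have h3 : 0 ≤ (τ * L₂ * ‖r‖) * (‖e‖ - (τ * ‖r‖ - ‖r‖)) :=
      mul_nonneg (by positivity) (by linarith)
    nlinarith [h1', h2, h3]
end

section
/- Suppose each f_i is twice continuously differentiable and μ-strongly convex for some μ > 0, each gradient ∇f_i is Lipschitz continuous with constant L₁, and the level set L_F(x⁰) := {x : F_i(x) ≤ F_i(x⁰) for all i} is bounded. Let (x^k) be generated by the NPGMO algorithm from x⁰. Then every accumulation point of (x^k) is a Pareto critical point of min F. -/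
open Filter Topology MeasureTheory
open scoped RealInnerProductSpace

set_option maxHeartbeats 1000000 in
theorem npgmo_accumulation_points_pareto_critical
    {n m : ℕ} (hn : 0 < n) (hm : 0 < m) {μ L₁ : ℝ} (hμ : 0 < μ)
    (f g F : Fin m → EuclideanSpace ℝ (Fin n) → ℝ)
    (f' : Fin m → EuclideanSpace ℝ (Fin n) → EuclideanSpace ℝ (Fin n))
    (f'' : Fin m → EuclideanSpace ℝ (Fin n) → (EuclideanSpace ℝ (Fin n) →L[ℝ] EuclideanSpace ℝ (Fin n)))
    (hgrad : ∀ i x, HasGradientAt (f i) (f' i x) x)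
    (hhess : ∀ i x, HasFDerivAt (f' i) (f'' i x) x)
    (hcont : ∀ i, Continuous (f'' i))
    (hg : ∀ i, ConvexOn ℝ Set.univ (g i))
    (hF : ∀ i x, F i x = f i x + g i x)
    (hsc : ∀ i x u, μ * ‖u‖ ^ 2 ≤ ⟪u, f'' i x u⟫)
    (hL1 : ∀ i u v, ‖f' i u - f' i v‖ ≤ L₁ * ‖u - v‖)
    (φ : EuclideanSpace ℝ (Fin n) → EuclideanSpace ℝ (Fin n) → ℝ)
    (hφ : ∀ y e, φ y e = Finset.univ.sup' ⟨⟨0, hm⟩, Finset.mem_univ _⟩ fun i =>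
      ⟪f' i y, e⟫ + g i (y + e) - g i y + (1/2) * ⟪e, f'' i y e⟫)
    (x0 : EuclideanSpace ℝ (Fin n))
    (hbd : Bornology.IsBounded {y : EuclideanSpace ℝ (Fin n) | ∀ i, F i y ≤ F i x0})
    (σ γ : ℝ) (hσ : 0 < σ ∧ σ < 1) (hγ : 0 < γ ∧ γ < 1)
    (x d : ℕ → EuclideanSpace ℝ (Fin n)) (t : ℕ → ℝ)
    (hdk : ∀ k, ∀ e : EuclideanSpace ℝ (Fin n), φ (x k) (d k) ≤ φ (x k) e)
    (hdne : ∀ k, d k ≠ 0)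
    (ht : ∀ k, ∃ j : ℕ, t k = γ ^ j ∧
      (∀ i, F i (x k + γ ^ j • d k) - F i (x k) ≤ γ ^ j * (σ * φ (x k) (d k))) ∧
      (∀ j' : ℕ, j' < j →
        ¬ ∀ i, F i (x k + γ ^ j' • d k) - F i (x k) ≤ γ ^ j' * (σ * φ (x k) (d k))))
    (hxk : ∀ k, x (k + 1) = x k + t k • d k)
    (hx0 : x 0 = x0)
    (xs : EuclideanSpace ℝ (Fin n)) (ψ : ℕ → ℕ) (hψ : StrictMono ψ)
    (hsub : Tendsto (fun k => x (ψ k)) atTop (𝓝 xs)) :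
    ∀ d : EuclideanSpace ℝ (Fin n), ∃ i : Fin m, ∃ L : ℝ, 0 ≤ L ∧
      Tendsto (fun t : ℝ => (F i (xs + t • d) - F i xs) / t) (𝓝[>] (0:ℝ)) (𝓝 L) := by
  obtain ⟨hσ0, hσ1⟩ := hσ
  obtain ⟨hγ0, hγ1⟩ := hγ
  have hne : (Finset.univ : Finset (Fin m)).Nonempty := ⟨⟨0, hm⟩, Finset.mem_univ _⟩
  -- continuity facts
  have hg_cont : ∀ i, Continuous (g i) := fun i => (hg i).locallyLipschitz.continuous
  have hf_cont : ∀ i, Continuous (f i) := fun i =>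
    continuous_iff_continuousAt.2 fun y =>
      (hgrad i y).hasFDerivAt.differentiableAt.continuousAt
  have hf'_cont : ∀ i, Continuous (f' i) := fun i =>
    continuous_iff_continuousAt.2 fun y => (hhess i y).differentiableAt.continuousAt
  have hF_cont : ∀ i, Continuous (F i) := by
    intro i
    have : F i = fun y => f i y + g i y := funext (hF i)
    rw [this]; exact (hf_cont i).add (hg_cont i)
  -- L₁ is positive
  have hL1pos : 0 < L₁ := by
    by_contra hcon
    push_neg at hcon
    have hconst : ∀ u, f' ⟨0, hm⟩ u = f' ⟨0, hm⟩ 0 := by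
      intro u
      have h1 := hL1 ⟨0, hm⟩ u 0
      have h2 : L₁ * ‖u - 0‖ ≤ 0 := mul_nonpos_of_nonpos_of_nonneg hcon (norm_nonneg _)
      have h3 : ‖f' ⟨0, hm⟩ u - f' ⟨0, hm⟩ 0‖ ≤ 0 := h1.trans h2
      have := le_antisymm h3 (norm_nonneg _)
      rwa [norm_eq_zero, sub_eq_zero] at this
    have hcf : f' ⟨0, hm⟩ = fun _ => f' ⟨0, hm⟩ 0 := funext hconst
    have h0 : HasFDerivAt (f' ⟨0, hm⟩)
        (0 : EuclideanSpace ℝ (Fin n) →L[ℝ] EuclideanSpace ℝ (Fin n)) 0 := by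
      rw [hcf]; exact hasFDerivAt_const _ _
    have hz := (hhess ⟨0, hm⟩ 0).unique h0
    set u : EuclideanSpace ℝ (Fin n) := EuclideanSpace.single ⟨0, hn⟩ (1 : ℝ) with hu
    have hsu := hsc ⟨0, hm⟩ 0 u
    rw [hz] at hsu
    simp only [ContinuousLinearMap.zero_apply, inner_zero_right] at hsu
    have hnu : ‖u‖ = 1 := by
      rw [hu, EuclideanSpace.norm_single, norm_one]
    rw [hnu] at hsu
    nlinarith
  -- derivative along lines
  have hline : ∀ i (y v : EuclideanSpace ℝ (Fin n)) (τ : ℝ),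
      HasDerivAt (fun s : ℝ => f i (y + s • v)) ⟪f' i (y + τ • v), v⟫ τ := by
    intro i y v τ
    have hcurve : HasDerivAt (fun s : ℝ => y + s • v) v τ := by
      simpa using ((hasDerivAt_id τ).smul_const v).const_add y
    have h := (hgrad i (y + τ • v)).hasFDerivAt.comp_hasDerivAt τ hcurve
    simp [InnerProductSpace.toDual_apply_apply] at h; exact h
  -- descent lemma
  have hdescent : ∀ i (y v : EuclideanSpace ℝ (Fin n)) (s : ℝ), 0 ≤ s →
      f i (y + s • v) - f i y ≤ s * ⟪f' i y, v⟫ + L₁ * s ^ 2 * ‖v‖ ^ 2 / 2 := by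
    intro i y v s hs
    set p : ℝ → ℝ := fun τ => f i (y + τ • v) - τ * ⟪f' i y, v⟫ - L₁ * τ ^ 2 * ‖v‖ ^ 2 / 2
      with hp
    have hder : ∀ τ : ℝ, HasDerivAt p
        (⟪f' i (y + τ • v), v⟫ - ⟪f' i y, v⟫ - L₁ * τ * ‖v‖ ^ 2) τ := by
      intro τ
      have h1 := hline i y v τ
      have h2 : HasDerivAt (fun τ : ℝ => τ * ⟪f' i y, v⟫) ⟪f' i y, v⟫ τ := by
        simpa using (hasDerivAt_id τ).mul_const ⟪f' i y, v⟫
      have h3 : HasDerivAt (fun τ : ℝ => L₁ * τ ^ 2 * ‖v‖ ^ 2 / 2)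
          (L₁ * τ * ‖v‖ ^ 2) τ := by
        have := ((hasDerivAt_pow 2 τ).const_mul L₁).mul_const (‖v‖ ^ 2 / 2)
        have e : (fun w : ℝ => L₁ * w ^ 2 * ‖v‖ ^ 2 / 2) = fun w => L₁ * w ^ 2 * (‖v‖ ^ 2 / 2) := by
          funext w; ring
        rw [e]; exact this.congr_deriv (by rw [show (2:ℕ) - 1 = 1 from rfl, pow_one]; push_cast; ring)
      exact (h1.sub h2).sub h3
    have hanti : AntitoneOn p (Set.Icc 0 s) := by
      apply antitoneOn_of_deriv_nonpos (convex_Icc 0 s)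
      · exact (Continuous.continuousOn (by
          have : Continuous fun τ : ℝ => f i (y + τ • v) :=
            (hf_cont i).comp (continuous_const.add (continuous_id.smul continuous_const))
          fun_prop))
      · intro τ _; exact (hder τ).differentiableAt.differentiableWithinAt
      · intro τ hτ
        rw [interior_Icc] at hτ
        rw [(hder τ).deriv]
        have hb : ⟪f' i (y + τ • v) - f' i y, v⟫ ≤ L₁ * τ * ‖v‖ ^ 2 := by
          calc ⟪f' i (y + τ • v) - f' i y, v⟫ ≤ ‖f' i (y + τ • v) - f' i y‖ * ‖v‖ :=
                real_inner_le_norm _ _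
            _ ≤ (L₁ * ‖(y + τ • v) - y‖) * ‖v‖ := by
                have := hL1 i (y + τ • v) y
                exact mul_le_mul_of_nonneg_right this (norm_nonneg _)
            _ = L₁ * τ * ‖v‖ ^ 2 := by
                rw [add_sub_cancel_left, norm_smul]
                rw [Real.norm_eq_abs, abs_of_pos hτ.1]
                ring
        rw [inner_sub_left] at hb
        linarith
    have := hanti (Set.left_mem_Icc.2 hs) (Set.right_mem_Icc.2 hs) hs
    simp only [hp, zero_smul, add_zero, zero_mul, zero_pow, mul_zero, zero_div, sub_zero,
      ne_eq, OfNat.ofNat_ne_zero, not_false_eq_true] at this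
    linarith
  -- convexity of g along segments
  have hg_seg : ∀ i (y v : EuclideanSpace ℝ (Fin n)) (s : ℝ), 0 ≤ s → s ≤ 1 →
      g i (y + s • v) - g i y ≤ s * (g i (y + v) - g i y) := by
    intro i y v s h0 h1
    have hc := (hg i).2 (Set.mem_univ (y + v)) (Set.mem_univ y) h0
      (by linarith : (0:ℝ) ≤ 1 - s) (by ring)
    have he : s • (y + v) + (1 - s) • y = y + s • v := by
      rw [smul_add, sub_smul, one_smul]; abel
    rw [he] at hc
    simp only [smul_eq_mul] at hc
    nlinarith [hc]
  -- lower bound for convex slopes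
  have hg_low : ∀ i (y v : EuclideanSpace ℝ (Fin n)) (r : ℝ), 0 < r →
      r * (g i y - g i (y - v)) ≤ g i (y + r • v) - g i y := by
    intro i y v r hr
    have h1r : (0:ℝ) < 1 + r := by linarith
    have hc := (hg i).2 (Set.mem_univ (y - v)) (Set.mem_univ (y + r • v))
      (le_of_lt (div_pos hr h1r)) (le_of_lt (div_pos one_pos h1r))
      (by field_simp; ring)
    have he : (r / (1 + r)) • (y - v) + (1 / (1 + r)) • (y + r • v) = y := by
      match_scalars <;> (field_simp; try ring)
    rw [he] at hc
    simp only [smul_eq_mul] at hc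
    have h2 := mul_le_mul_of_nonneg_left hc h1r.le
    have h3 : (1 + r) * ((r / (1 + r)) * g i (y - v) + (1 / (1 + r)) * g i (y + r • v))
        = r * g i (y - v) + g i (y + r • v) := by
      field_simp
    rw [h3] at h2
    nlinarith
  -- Step A : θ_k ≤ -(μ/4)‖d_k‖²
  have hθneg : ∀ k, φ (x k) (d k) ≤ -(μ / 4) * ‖d k‖ ^ 2 := by
    intro k
    have key : φ (x k) ((1/2 : ℝ) • d k)
        ≤ (1/2) * φ (x k) (d k) - (μ / 8) * ‖d k‖ ^ 2 := by
      rw [hφ]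
      apply Finset.sup'_le
      intro i _
      have hTi : ⟪f' i (x k), d k⟫ + g i (x k + d k) - g i (x k)
          + (1/2) * ⟪d k, f'' i (x k) (d k)⟫ ≤ φ (x k) (d k) := by
        rw [hφ]
        exact Finset.le_sup' (fun i => ⟪f' i (x k), d k⟫ + g i (x k + d k) - g i (x k)
          + (1/2) * ⟪d k, f'' i (x k) (d k)⟫) (Finset.mem_univ i)
      have hgs := hg_seg i (x k) (d k) (1/2) (by norm_num) (by norm_num)
      have hq := hsc i (x k) (d k)
      have e1 : ⟪f' i (x k), (1/2 : ℝ) • d k⟫ = (1/2) * ⟪f' i (x k), d k⟫ :=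
        real_inner_smul_right _ _ _
      have e2 : ⟪(1/2 : ℝ) • d k, f'' i (x k) ((1/2 : ℝ) • d k)⟫
          = (1/4) * ⟪d k, f'' i (x k) (d k)⟫ := by
        rw [_root_.map_smul, real_inner_smul_left, real_inner_smul_right]; ring
      rw [e1, e2]
      linarith
    have h1 := (hdk k ((1/2 : ℝ) • d k)).trans key
    linarith
  have hθ0 : ∀ k, φ (x k) (d k) ≤ 0 := by
    intro k
    have := hθneg k
    nlinarith [sq_nonneg ‖d k‖]
  -- step-size lower bound
  set tmin : ℝ := min 1 (γ * μ / L₁) with htmin_def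
  have htmin : 0 < tmin := lt_min one_pos (by positivity)
  have htpos : ∀ k, 0 < t k := by
    intro k
    obtain ⟨j, hj, -, -⟩ := ht k
    rw [hj]; exact pow_pos hγ0 _
  have htlow : ∀ k, tmin ≤ t k := by
    intro k
    obtain ⟨j, hj, hjA, hjF⟩ := ht k
    match j, hj, hjF with
    | 0, hj, _ =>
      rw [hj, pow_zero]; exact min_le_left _ _
    | (j' + 1), hj, hjF =>
      have hfail := hjF j' (Nat.lt_succ_self j')
      push_neg at hfail
      obtain ⟨i, hi⟩ := hfail
      set s := γ ^ j' with hs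
      have hs0 : 0 < s := pow_pos hγ0 _
      have hs1 : s ≤ 1 := pow_le_one₀ hγ0.le hγ1.le
      have hTi : ⟪f' i (x k), d k⟫ + g i (x k + d k) - g i (x k)
          + (1/2) * ⟪d k, f'' i (x k) (d k)⟫ ≤ φ (x k) (d k) := by
        rw [hφ]
        exact Finset.le_sup' (fun i => ⟪f' i (x k), d k⟫ + g i (x k + d k) - g i (x k)
          + (1/2) * ⟪d k, f'' i (x k) (d k)⟫) (Finset.mem_univ i)
      have hq := hsc i (x k) (d k)
      have hub : F i (x k + s • d k) - F i (x k)
          ≤ s * φ (x k) (d k) - s * (μ / 2) * ‖d k‖ ^ 2 + L₁ * s ^ 2 * ‖d k‖ ^ 2 / 2 := by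
        have h1 := hdescent i (x k) (d k) s hs0.le
        have h2 := hg_seg i (x k) (d k) s hs0.le hs1
        rw [hF, hF]
        nlinarith [h1, h2, hTi, hq, hs0]
      have hD : (0:ℝ) < ‖d k‖ ^ 2 := by
        have : 0 < ‖d k‖ := norm_pos_iff.2 (hdne k)
        positivity
      have hθk := hθ0 k
      have h3 : s * φ (x k) (d k) ≤ s * (σ * φ (x k) (d k)) := by
        nlinarith [mul_nonneg (mul_nonneg hs0.le (sub_nonneg.2 hσ1.le))
          (neg_nonneg.2 hθk)]
      have h4 : μ < L₁ * s := by
        nlinarith [hi, hub, h3, mul_pos hs0 hD]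
      have h5 : t k = γ * s := by rw [hj, hs, pow_succ]; ring
      have h6 : γ * μ / L₁ ≤ t k := by
        rw [h5, div_le_iff₀ hL1pos]
        have h7 := mul_pos hγ0 (sub_pos.2 h4)
        nlinarith [h7]
      exact (min_le_right _ _).trans h6
  -- monotone decrease of the objective values
  have hArm : ∀ k i, F i (x (k + 1)) - F i (x k) ≤ t k * (σ * φ (x k) (d k)) := by
    intro k i
    obtain ⟨j, hj, hjA, -⟩ := ht k
    rw [hxk k, hj]
    exact hjA i
  have hmono : ∀ i, Antitone fun k => F i (x k) := by
    intro i
    apply antitone_nat_of_succ_le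
    intro k
    have h1 := hArm k i
    have h2 : t k * (σ * φ (x k) (d k)) ≤ 0 :=
      mul_nonpos_of_nonneg_of_nonpos (htpos k).le
        (mul_nonpos_of_nonneg_of_nonpos hσ0.le (hθ0 k))
    linarith
  set i0 : Fin m := ⟨0, hm⟩ with hi0
  have hFlim : Tendsto (fun k => F i0 (x (ψ k))) atTop (𝓝 (F i0 xs)) :=
    ((hF_cont i0).tendsto xs).comp hsub
  have hbdd : BddBelow (Set.range fun k => F i0 (x k)) := by
    refine ⟨F i0 xs, ?_⟩
    rintro - ⟨k, rfl⟩
    show F i0 xs ≤ F i0 (x k)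
    refine le_of_tendsto hFlim ?_
    filter_upwards [eventually_ge_atTop k] with j hj
    exact hmono i0 (hj.trans (hψ.le_apply))
  have hFconv : Tendsto (fun k => F i0 (x k)) atTop (𝓝 (⨅ k, F i0 (x k))) :=
    tendsto_atTop_ciInf (hmono i0) hbdd
  have hdiff0 : Tendsto (fun k => F i0 (x (k + 1)) - F i0 (x k)) atTop (𝓝 0) := by
    have h1 : Tendsto (fun k => F i0 (x (k + 1))) atTop (𝓝 (⨅ k, F i0 (x k))) :=
      hFconv.comp (tendsto_add_atTop_nat 1)
    simpa using h1.sub hFconv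
  have htθ : Tendsto (fun k => t k * (σ * φ (x k) (d k))) atTop (𝓝 0) := by
    apply tendsto_of_tendsto_of_tendsto_of_le_of_le hdiff0 tendsto_const_nhds
    · intro k; exact hArm k i0
    · intro k
      exact mul_nonpos_of_nonneg_of_nonpos (htpos k).le
        (mul_nonpos_of_nonneg_of_nonpos hσ0.le (hθ0 k))
  have hθtendsto : Tendsto (fun k => φ (x k) (d k)) atTop (𝓝 0) := by
    have hc : (0:ℝ) < tmin * σ := mul_pos htmin hσ0
    have hup : Tendsto (fun k => -(t k * (σ * φ (x k) (d k))) / (tmin * σ)) atTop (𝓝 0) := by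
      simpa using htθ.neg.div_const (tmin * σ)
    have hneg : Tendsto (fun k => -(φ (x k) (d k))) atTop (𝓝 0) := by
      apply tendsto_of_tendsto_of_tendsto_of_le_of_le tendsto_const_nhds hup
      · intro k
        show (0:ℝ) ≤ -φ (x k) (d k)
        linarith [hθ0 k]
      · intro k
        show -φ (x k) (d k) ≤ -(t k * (σ * φ (x k) (d k))) / (tmin * σ)
        rw [le_div_iff₀ hc]
        have h1 := htlow k
        have h2 := hθ0 k
        nlinarith [mul_nonneg (mul_nonneg (sub_nonneg.2 h1) hσ0.le)
          (neg_nonneg.2 h2)]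
    simpa using hneg.neg
  -- criticality of xs
  have hcrit : ∀ e, 0 ≤ φ xs e := by
    intro e
    have hφc : Tendsto (fun y => φ y e) (𝓝 xs) (𝓝 (φ xs e)) := by
      have hfun : (fun y => φ y e) = fun y => Finset.univ.sup' hne fun i =>
          ⟪f' i y, e⟫ + g i (y + e) - g i y + (1/2) * ⟪e, f'' i y e⟫ :=
        funext fun y => hφ y e
      rw [hfun, hφ]
      apply Continuous.tendsto
      apply Continuous.finset_sup'_apply hne
      intro i _
      have c1 : Continuous fun y => ⟪f' i y, e⟫ :=
        Continuous.inner (hf'_cont i) continuous_const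
      have c2 : Continuous fun y => g i (y + e) :=
        (hg_cont i).comp (continuous_id.add continuous_const)
      have c3 : Continuous fun y => ⟪e, f'' i y e⟫ :=
        Continuous.inner continuous_const ((hcont i).clm_apply continuous_const)
      fun_prop
    have hθψ : Tendsto (fun k => φ (x (ψ k)) (d (ψ k))) atTop (𝓝 0) :=
      hθtendsto.comp hψ.tendsto_atTop
    exact le_of_tendsto_of_tendsto' hθψ (hφc.comp hsub) fun k => hdk (ψ k) e
  -- final argument
  intro dd
  set sl : Fin m → ℝ → ℝ := fun i τ => (g i (xs + τ • dd) - g i xs) / τ with hsl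
  have hsl_mono : ∀ i, MonotoneOn (sl i) (Set.Ioi 0) := by
    intro i a ha b hb hab
    try simp only [Set.mem_Ioi] at ha hb
    have h1 := hg_seg i xs (b • dd) (a / b) (div_nonneg ha.le hb.le)
      ((div_le_one hb).2 hab)
    rw [smul_smul, div_mul_cancel₀ _ hb.ne'] at h1
    simp only [hsl]
    rw [div_le_div_iff₀ ha hb]
    have h3 : a / b * (g i (xs + b • dd) - g i xs) * b
        = (g i (xs + b • dd) - g i xs) * a := by
      field_simp
    calc (g i (xs + a • dd) - g i xs) * b
        ≤ a / b * (g i (xs + b • dd) - g i xs) * b :=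
          mul_le_mul_of_nonneg_right h1 hb.le
      _ = (g i (xs + b • dd) - g i xs) * a := h3
  have hsl_bdd : ∀ i, BddBelow (sl i '' Set.Ioi 0) := by
    intro i
    refine ⟨g i xs - g i (xs - dd), ?_⟩
    rintro - ⟨r, hr, rfl⟩
    try simp only [Set.mem_Ioi] at hr
    have h1 := hg_low i xs dd r hr
    simp only [hsl]
    rw [le_div_iff₀ hr]
    nlinarith
  have hsl_lim : ∀ i, Tendsto (sl i) (𝓝[>] 0) (𝓝 (sInf (sl i '' Set.Ioi 0))) :=
    fun i => (hsl_mono i).tendsto_nhdsGT (hsl_bdd i)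
  set G : Fin m → ℝ := fun i => sInf (sl i '' Set.Ioi 0) with hG
  set D : Fin m → ℝ := fun i => ⟪f' i xs, dd⟫ + G i with hD
  have hbracket : ∀ i, Tendsto
      (fun τ : ℝ => ⟪f' i xs, dd⟫ + sl i τ + τ / 2 * ⟪dd, f'' i xs dd⟫)
      (𝓝[>] 0) (𝓝 (D i)) := by
    intro i
    have h1 : Tendsto (fun τ : ℝ => τ / 2 * ⟪dd, f'' i xs dd⟫) (𝓝[>] (0:ℝ)) (𝓝 0) := by
      have h2 : Tendsto (fun τ : ℝ => τ / 2 * ⟪dd, f'' i xs dd⟫) (𝓝 (0:ℝ)) (𝓝 0) := by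
        have := ((continuous_id.div_const (2:ℝ)).mul
          (continuous_const (y := ⟪dd, f'' i xs dd⟫))).tendsto 0
        simp only [id_eq, Pi.mul_apply, zero_div, zero_mul] at this; exact this
      exact h2.mono_left nhdsWithin_le_nhds
    have := (tendsto_const_nhds (x := ⟪f' i xs, dd⟫)
      (f := 𝓝[>] (0:ℝ))).add ((hsl_lim i).add h1)
    simpa [hD, add_assoc] using this
  have hexists : ∃ i, 0 ≤ D i := by
    by_contra hcon
    push_neg at hcon
    have hev : ∀ᶠ τ in 𝓝[>] (0:ℝ), ∀ i,
        ⟪f' i xs, dd⟫ + sl i τ + τ / 2 * ⟪dd, f'' i xs dd⟫ < 0 := by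
      rw [eventually_all]
      intro i
      exact (hbracket i).eventually_lt_const (hcon i)
    obtain ⟨τ, hτ, hτpos⟩ := (hev.and self_mem_nhdsWithin).exists
    try simp only [Set.mem_Ioi] at hτpos
    have h1 : φ xs (τ • dd) < 0 := by
      rw [hφ]
      apply (Finset.sup'_lt_iff _).2
      intro i _
      have hb := hτ i
      have e1 : ⟪f' i xs, τ • dd⟫ = τ * ⟪f' i xs, dd⟫ := real_inner_smul_right _ _ _
      have e2 : ⟪τ • dd, f'' i xs (τ • dd)⟫ = τ * τ * ⟪dd, f'' i xs dd⟫ := by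
        rw [_root_.map_smul, real_inner_smul_left, real_inner_smul_right]; ring
      have e3 : g i (xs + τ • dd) - g i xs = τ * sl i τ := by
        simp only [hsl]
        field_simp
      rw [e1, e2]
      have h4 : τ * (⟪f' i xs, dd⟫ + sl i τ + τ / 2 * ⟪dd, f'' i xs dd⟫) < 0 :=
        mul_neg_of_pos_of_neg hτpos hb
      nlinarith [e3, h4]
    exact absurd (hcrit (τ • dd)) (not_le.2 h1)
  obtain ⟨i, hDi⟩ := hexists
  refine ⟨i, D i, hDi, ?_⟩
  have hfq : Tendsto (fun τ : ℝ => (f i (xs + τ • dd) - f i xs) / τ)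
      (𝓝[>] 0) (𝓝 ⟪f' i xs, dd⟫) := by
    have hd := hline i xs dd 0
    simp only [zero_smul, add_zero] at hd
    rw [hasDerivAt_iff_tendsto_slope] at hd
    have hmon : (𝓝[>] (0:ℝ)) ≤ 𝓝[≠] (0:ℝ) :=
      nhdsWithin_mono 0 fun τ hτ => ne_of_gt hτ
    refine (hd.mono_left hmon).congr ?_
    intro τ
    rw [slope_def_field]
    simp
  have hsum := hfq.add (hsl_lim i)
  refine hsum.congr ?_
  intro τ
  simp only [hsl]
  rw [← add_div]
  congr 1
  rw [hF, hF]
  ring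
end

section
/- (Strong convergence of NPGMO.) Suppose each f_i is twice continuously differentiable and μ-strongly convex for some μ > 0 and each g_i is convex. Let (x^k) be generated by the NPGMO algorithm from x⁰. Then (x^k) converges to a point x* that is a Pareto solution of min F. -/
open Filter Topology MeasureTheory
open scoped RealInnerProductSpace

section helpers

variable {E : Type*} [NormedAddCommGroup E] [InnerProductSpace ℝ E] [CompleteSpace E]

lemma npgmo_line_deriv {f : E → ℝ} {f' : E → E}
    (hgrad : ∀ y, HasGradientAt f (f' y) y) (a v : E) (s : ℝ) :
    HasDerivAt (fun t : ℝ => f (a + t • v)) ⟪f' (a + s • v), v⟫ s := by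
  have hc : HasDerivAt (fun t : ℝ => a + t • v) v s := by
    simpa using ((hasDerivAt_id s).smul_const v).const_add a
  have := (hgrad (a + s • v)).hasFDerivAt.comp_hasDerivAt s hc
  simpa [InnerProductSpace.toDual_apply_apply, Function.comp_def] using this

lemma npgmo_line_deriv2 {f' : E → E} {f'' : E → E →L[ℝ] E}
    (hhess : ∀ y, HasFDerivAt f' (f'' y) y) (a v : E) (s : ℝ) :
    HasDerivAt (fun t : ℝ => ⟪f' (a + t • v), v⟫) ⟪f'' (a + s • v) v, v⟫ s := by
  have hc : HasDerivAt (fun t : ℝ => a + t • v) v s := by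
    simpa using ((hasDerivAt_id s).smul_const v).const_add a
  have h1 : HasDerivAt (fun t : ℝ => f' (a + t • v)) (f'' (a + s • v) v) s :=
    (hhess (a + s • v)).comp_hasDerivAt s hc
  have := h1.inner ℝ (hasDerivAt_const s v)
  simpa using this

/-- Upper Taylor bound along a segment. -/
lemma npgmo_taylor_upper {f : E → ℝ} {f' : E → E} {f'' : E → E →L[ℝ] E}
    (hgrad : ∀ y, HasGradientAt f (f' y) y)
    (hhess : ∀ y, HasFDerivAt f' (f'' y) y)
    (a v : E) (c : ℝ)
    (hb : ∀ s ∈ Set.Icc (0:ℝ) 1, ⟪f'' (a + s • v) v, v⟫ ≤ c) :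
    f (a + v) ≤ f a + ⟪f' a, v⟫ + c / 2 := by
  set p : ℝ → ℝ := fun t => ⟪f' (a + t • v), v⟫ with hp
  have hpd : ∀ s : ℝ, HasDerivAt p ⟪f'' (a + s • v) v, v⟫ s :=
    fun s => npgmo_line_deriv2 hhess a v s
  -- step 1 : p s ≤ p 0 + c * s on [0,1]
  have step1 : ∀ s ∈ Set.Icc (0:ℝ) 1, p s ≤ p 0 + c * s := by
    have hq : MonotoneOn (fun t => p 0 + c * t - p t) (Set.Icc 0 1) := by
      apply monotoneOn_of_deriv_nonneg (convex_Icc 0 1)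
      · have hpdiff : Differentiable ℝ p := fun s => (hpd s).differentiableAt
        have hpc : Continuous p := hpdiff.continuous
        exact ((continuous_const.add (continuous_const.mul continuous_id)).sub hpc).continuousOn
      · have hpdiff : Differentiable ℝ p := fun s => (hpd s).differentiableAt
        exact ((differentiable_const _ |>.add (differentiable_id.const_mul c)).sub
          hpdiff).differentiableOn
      · intro s hs
        rw [interior_Icc] at hs
        have hds : HasDerivAt (fun t => p 0 + c * t - p t) (c - ⟪f'' (a + s • v) v, v⟫) s := by
          simpa using ((hasDerivAt_const s (p 0)).fun_add ((hasDerivAt_id s).const_mul c)).fun_sub (hpd s)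
        rw [hds.deriv]
        have := hb s ⟨hs.1.le, hs.2.le⟩
        linarith
    intro s hs
    have := hq ⟨le_refl 0, zero_le_one⟩ hs hs.1
    simp only at this
    nlinarith [this]
  -- step 2
  have hr : MonotoneOn (fun t : ℝ => f a + t * ⟪f' a, v⟫ + c * t ^ 2 / 2 - f (a + t • v))
      (Set.Icc 0 1) := by
    apply monotoneOn_of_deriv_nonneg (convex_Icc 0 1)
    · have hfd : Differentiable ℝ fun t : ℝ => f (a + t • v) :=
        fun s => (npgmo_line_deriv hgrad a v s).differentiableAt
      have hfc : Continuous fun t : ℝ => f (a + t • v) := hfd.continuous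
      exact (((continuous_const.add (continuous_id.mul continuous_const)).add
        ((continuous_const.mul (continuous_pow 2)).div_const 2)).sub hfc).continuousOn
    · intro s hs
      apply DifferentiableAt.differentiableWithinAt
      have hfd : DifferentiableAt ℝ (fun t : ℝ => f (a + t • v)) s :=
        (npgmo_line_deriv hgrad a v s).differentiableAt
      exact (((differentiableAt_const _).add (differentiableAt_id.mul
        (differentiableAt_const _))).add (((differentiableAt_pow 2).const_mul c).div_const 2)).sub hfd
    · intro s hs
      rw [interior_Icc] at hs
      have hds : HasDerivAt (fun t : ℝ => f a + t * ⟪f' a, v⟫ + c * t ^ 2 / 2 - f (a + t • v))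
          (⟪f' a, v⟫ + c * s - p s) s := by
        have h1 : HasDerivAt (fun t : ℝ => f a + t * ⟪f' a, v⟫ + c * t ^ 2 / 2)
            (⟪f' a, v⟫ + c * s) s := by
          have : HasDerivAt (fun t : ℝ => c * t ^ 2 / 2) (c * (2 * s ^ 1) / 2) s := by
            exact (((hasDerivAt_pow 2 s).const_mul c).div_const 2)
          have h2 := ((hasDerivAt_id s).mul_const ⟪f' a, v⟫).const_add (f a) |>.fun_add this
          exact h2.congr_deriv (by ring)
        simpa using h1.fun_sub (npgmo_line_deriv hgrad a v s)
      rw [hds.deriv]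
      have hps := step1 s ⟨hs.1.le, hs.2.le⟩
      have hp0 : p 0 = ⟪f' a, v⟫ := by simp [hp]
      rw [hp0] at hps
      linarith
  have h01 := hr ⟨le_refl 0, zero_le_one⟩ ⟨zero_le_one, le_refl 1⟩ zero_le_one
  simp only [zero_smul, add_zero, one_smul, zero_mul, zero_pow, mul_zero, zero_div, one_mul,
    one_pow, mul_one] at h01
  linarith

/-- Lower Taylor bound (strong convexity style). -/
lemma npgmo_taylor_lower {f : E → ℝ} {f' : E → E} {f'' : E → E →L[ℝ] E}
    (hgrad : ∀ y, HasGradientAt f (f' y) y)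
    (hhess : ∀ y, HasFDerivAt f' (f'' y) y)
    (a v : E) (c : ℝ)
    (hb : ∀ s ∈ Set.Icc (0:ℝ) 1, c ≤ ⟪f'' (a + s • v) v, v⟫) :
    f a + ⟪f' a, v⟫ + c / 2 ≤ f (a + v) := by
  have hgrad' : ∀ y, HasGradientAt (fun z => -(f z)) (-(f' y)) y := by
    intro y
    rw [hasGradientAt_iff_hasFDerivAt]
    have := (hgrad y).hasFDerivAt.fun_neg
    simpa [map_neg] using this
  have hhess' : ∀ y, HasFDerivAt (fun z => -(f' z)) (-(f'' y)) y := fun y => (hhess y).neg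
  have := npgmo_taylor_upper hgrad' hhess' a v (-c) (by
    intro s hs
    have := hb s hs
    simp only [ContinuousLinearMap.neg_apply, inner_neg_left]
    linarith)
  simp only [inner_neg_left] at this
  linarith

end helpers

set_option maxHeartbeats 2000000 in
theorem npgmo_strong_convergence
    {n m : ℕ} (hn : 0 < n) (hm : 0 < m) {μ : ℝ} (hμ : 0 < μ)
    (f g F : Fin m → EuclideanSpace ℝ (Fin n) → ℝ)
    (f' : Fin m → EuclideanSpace ℝ (Fin n) → EuclideanSpace ℝ (Fin n))
    (f'' : Fin m → EuclideanSpace ℝ (Fin n) → (EuclideanSpace ℝ (Fin n) →L[ℝ] EuclideanSpace ℝ (Fin n)))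
    (hgrad : ∀ i x, HasGradientAt (f i) (f' i x) x)
    (hhess : ∀ i x, HasFDerivAt (f' i) (f'' i x) x)
    (hcont : ∀ i, Continuous (f'' i))
    (hg : ∀ i, ConvexOn ℝ Set.univ (g i))
    (hF : ∀ i x, F i x = f i x + g i x)
    (hsc : ∀ i x u, μ * ‖u‖ ^ 2 ≤ ⟪u, f'' i x u⟫)
    (φ : EuclideanSpace ℝ (Fin n) → EuclideanSpace ℝ (Fin n) → ℝ)
    (hφ : ∀ y e, φ y e = Finset.univ.sup' ⟨⟨0, hm⟩, Finset.mem_univ _⟩ fun i =>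
      ⟪f' i y, e⟫ + g i (y + e) - g i y + (1/2) * ⟪e, f'' i y e⟫)
    (σ γ : ℝ) (hσ : 0 < σ ∧ σ < 1) (hγ : 0 < γ ∧ γ < 1)
    (x d : ℕ → EuclideanSpace ℝ (Fin n)) (t : ℕ → ℝ)
    (hdk : ∀ k, ∀ e : EuclideanSpace ℝ (Fin n), φ (x k) (d k) ≤ φ (x k) e)
    (hdne : ∀ k, d k ≠ 0)
    (ht : ∀ k, ∃ j : ℕ, t k = γ ^ j ∧
      (∀ i, F i (x k + γ ^ j • d k) - F i (x k) ≤ γ ^ j * (σ * φ (x k) (d k))) ∧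
      (∀ j' : ℕ, j' < j →
        ¬ ∀ i, F i (x k + γ ^ j' • d k) - F i (x k) ≤ γ ^ j' * (σ * φ (x k) (d k))))
    (hxk : ∀ k, x (k + 1) = x k + t k • d k)
    :
    ∃ xs : EuclideanSpace ℝ (Fin n), Tendsto x atTop (𝓝 xs) ∧
      ¬ ∃ z : EuclideanSpace ℝ (Fin n), (∀ i, F i z ≤ F i xs) ∧ ∃ j, F j z < F j xs := by
  obtain ⟨hσ0, hσ1⟩ := hσ
  obtain ⟨hγ0, hγ1⟩ := hγ
  have hne : (Finset.univ : Finset (Fin m)).Nonempty := ⟨⟨0, hm⟩, Finset.mem_univ _⟩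
  have h_le_φ : ∀ (y e : EuclideanSpace ℝ (Fin n)) (i : Fin m),
      ⟪f' i y, e⟫ + g i (y + e) - g i y + (1/2) * ⟪e, f'' i y e⟫ ≤ φ y e := by
    intro y e i
    rw [hφ]
    exact Finset.le_sup'
      (fun i => ⟪f' i y, e⟫ + g i (y + e) - g i y + (1/2) * ⟪e, f'' i y e⟫)
      (Finset.mem_univ i)
  have φ_le : ∀ (y e : EuclideanSpace ℝ (Fin n)) (c : ℝ),
      (∀ i, ⟪f' i y, e⟫ + g i (y + e) - g i y + (1/2) * ⟪e, f'' i y e⟫ ≤ c) → φ y e ≤ c := by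
    intro y e c hc
    rw [hφ]
    exact Finset.sup'_le _ _ fun i _ => hc i
  -- strong convexity inequality
  have hscf : ∀ i (a v : EuclideanSpace ℝ (Fin n)), f i a + ⟪f' i a, v⟫ + μ * ‖v‖ ^ 2 / 2 ≤ f i (a + v) := by
    intro i a v
    have := npgmo_taylor_lower (hgrad i) (hhess i) a v (μ * ‖v‖ ^ 2) (by
      intro s hs
      have := hsc i (a + s • v) v
      rwa [real_inner_comm] at this)
    linarith
  set θ : ℕ → ℝ := fun k => φ (x k) (d k) with hθdef
  have θ_le : ∀ k, θ k ≤ -(μ / 4) * ‖d k‖ ^ 2 := by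
    intro k
    have hmin : θ k ≤ φ (x k) ((1/2 : ℝ) • d k) := hdk k _
    have hbound : φ (x k) ((1/2 : ℝ) • d k) ≤ (1/2) * θ k - μ/8 * ‖d k‖ ^ 2 := by
      apply φ_le
      intro i
      have hq := hsc i (x k) (d k)
      have hgc : g i (x k + (1/2 : ℝ) • d k) ≤ (1/2) * g i (x k + d k) + (1/2) * g i (x k) := by
        have h2 := (hg i).2 (Set.mem_univ (x k + d k)) (Set.mem_univ (x k))
          (by norm_num : (0:ℝ) ≤ 1/2) (by norm_num : (0:ℝ) ≤ 1/2) (by norm_num)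
        have hpt : (1/2 : ℝ) • (x k + d k) + (1/2 : ℝ) • (x k) = x k + (1/2 : ℝ) • d k := by
          module
        rw [hpt, smul_eq_mul, smul_eq_mul] at h2
        exact h2
      have hinner : ⟪f' i (x k), (1/2 : ℝ) • d k⟫ = (1/2) * ⟪f' i (x k), d k⟫ :=
        real_inner_smul_right _ _ _
      have hquad : ⟪(1/2 : ℝ) • d k, f'' i (x k) ((1/2 : ℝ) • d k)⟫
          = (1/4) * ⟪d k, f'' i (x k) (d k)⟫ := by
        rw [_root_.map_smul, real_inner_smul_left, real_inner_smul_right]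
        ring
      have hcomp := h_le_φ (x k) (d k) i
      rw [hinner, hquad]
      have hθk : φ (x k) (d k) = θ k := rfl
      rw [hθk] at hcomp
      linarith
    linarith
  have θ_neg : ∀ k, θ k < 0 := by
    intro k
    have h1 := θ_le k
    have h2 : 0 < ‖d k‖ := norm_pos_iff.2 (hdne k)
    nlinarith [mul_pos hμ (mul_pos h2 h2)]
  have ht_pos : ∀ k, 0 < t k := by
    intro k
    obtain ⟨j, htk, -, -⟩ := ht k
    rw [htk]; positivity
  have ht_le1 : ∀ k, t k ≤ 1 := by
    intro k
    obtain ⟨j, htk, -, -⟩ := ht k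
    rw [htk]; exact pow_le_one₀ hγ0.le hγ1.le
  have hstep : ∀ k i, F i (x (k + 1)) - F i (x k) ≤ t k * (σ * θ k) := by
    intro k i
    obtain ⟨j, htk, hok, -⟩ := ht k
    rw [hxk k, htk]
    exact hok i
  have hdec : ∀ k i, F i (x (k + 1)) ≤ F i (x k) := by
    intro k i
    have h1 := hstep k i
    have h2 := θ_neg k
    have h3 := ht_pos k
    nlinarith [mul_pos h3 (mul_pos hσ0 (neg_pos.2 h2))]
  have hmono : ∀ i k l, k ≤ l → F i (x l) ≤ F i (x k) := by
    intro i k l hkl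
    induction l, hkl using Nat.le_induction with
    | base => exact le_refl _
    | succ l hkl ih => exact (hdec l i).trans ih
  -- continuity
  have hf_cont : ∀ i, Continuous (f i) := by
    intro i
    have : Differentiable ℝ (f i) := fun y => (hgrad i y).differentiableAt
    exact this.continuous
  have hf'_cont : ∀ i, Continuous (f' i) := by
    intro i
    have : Differentiable ℝ (f' i) := fun y => (hhess i y).differentiableAt
    exact this.continuous
  have hg_cont : ∀ i, Continuous (g i) := by
    intro i
    rw [← continuousOn_univ]
    exact (hg i).continuousOn isOpen_univ
  have hF_cont : ∀ i, Continuous (F i) := by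
    intro i
    have : F i = fun y => f i y + g i y := funext (hF i)
    rw [this]
    exact (hf_cont i).add (hg_cont i)
  -- boundedness of the iterates
  have hlev : ∀ k i, F i (x k) ≤ F i (x 0) := fun k i => hmono i 0 k (Nat.zero_le k)
  obtain ⟨R, hR1, hball⟩ : ∃ R : ℝ, 1 ≤ R ∧ ∀ k, x k ∈ Metric.closedBall (x 0) R := by
    obtain ⟨Mg, hMg⟩ := (isCompact_closedBall (x 0) 1).exists_bound_of_continuousOn
      (hg_cont ⟨0, hm⟩).continuousOn
    have hMg0 : 0 ≤ Mg := le_trans (norm_nonneg _) (hMg (x 0) (Metric.mem_closedBall_self zero_le_one))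
    set G0 : ℝ := ‖f' ⟨0, hm⟩ (x 0)‖ with hG0def
    refine ⟨max 1 (2 * (G0 + 2 * Mg + 1) / μ), le_max_left _ _, ?_⟩
    intro k
    rw [Metric.mem_closedBall, dist_eq_norm]
    by_contra hcon
    push_neg at hcon
    set ρ : ℝ := ‖x k - x 0‖ with hρdef
    have hRge : 2 * (G0 + 2 * Mg + 1) / μ ≤ max 1 (2 * (G0 + 2 * Mg + 1) / μ) := le_max_right _ _
    have hρ1 : 1 < ρ := lt_of_le_of_lt (le_max_left _ _) hcon
    have hρ0 : 0 < ρ := by linarith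
    -- convexity of g along the segment
    have hinv1 : ρ⁻¹ ≤ 1 := by
      rw [inv_le_one_iff₀]
      right; linarith
    have hu : g ⟨0, hm⟩ (x 0 + ρ⁻¹ • (x k - x 0)) ≤
        (1 - ρ⁻¹) * g ⟨0, hm⟩ (x 0) + ρ⁻¹ * g ⟨0, hm⟩ (x k) := by
      have h2 := (hg ⟨0, hm⟩).2 (Set.mem_univ (x 0)) (Set.mem_univ (x k))
        (by linarith : (0:ℝ) ≤ 1 - ρ⁻¹) (by positivity : (0:ℝ) ≤ ρ⁻¹) (by ring)
      have hpt : (1 - ρ⁻¹) • (x 0) + ρ⁻¹ • (x k) = x 0 + ρ⁻¹ • (x k - x 0) := by module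
      rw [hpt, smul_eq_mul, smul_eq_mul] at h2
      exact h2
    have hmem : x 0 + ρ⁻¹ • (x k - x 0) ∈ Metric.closedBall (x 0) 1 := by
      rw [Metric.mem_closedBall, dist_eq_norm]
      have heq : x 0 + ρ⁻¹ • (x k - x 0) - x 0 = ρ⁻¹ • (x k - x 0) := by abel
      rw [heq, norm_smul, Real.norm_eq_abs, abs_of_pos (inv_pos.2 hρ0)]
      exact le_of_eq (inv_mul_cancel₀ hρ0.ne')
    have hgu : -Mg ≤ g ⟨0, hm⟩ (x 0 + ρ⁻¹ • (x k - x 0)) := by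
      have := hMg _ hmem
      rw [Real.norm_eq_abs] at this
      linarith [abs_le.1 this]
    have hg0b : g ⟨0, hm⟩ (x 0) ≤ Mg := by
      have := hMg (x 0) (Metric.mem_closedBall_self zero_le_one)
      rw [Real.norm_eq_abs] at this
      linarith [abs_le.1 this]
    -- lower bound on g (x k)
    have hgk : g ⟨0, hm⟩ (x k) ≥ ρ * g ⟨0, hm⟩ (x 0 + ρ⁻¹ • (x k - x 0)) - (ρ - 1) * g ⟨0, hm⟩ (x 0) := by
      have h3 : g ⟨0, hm⟩ (x 0 + ρ⁻¹ • (x k - x 0)) - (1 - ρ⁻¹) * g ⟨0, hm⟩ (x 0) ≤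
          ρ⁻¹ * g ⟨0, hm⟩ (x k) := by linarith
      have h4 := mul_le_mul_of_nonneg_left h3 hρ0.le
      have h5 : ρ * (ρ⁻¹ * g ⟨0, hm⟩ (x k)) = g ⟨0, hm⟩ (x k) := by
        field_simp
      have h6 : ρ * (g ⟨0, hm⟩ (x 0 + ρ⁻¹ • (x k - x 0)) - (1 - ρ⁻¹) * g ⟨0, hm⟩ (x 0))
          = ρ * g ⟨0, hm⟩ (x 0 + ρ⁻¹ • (x k - x 0)) - (ρ - 1) * g ⟨0, hm⟩ (x 0) := by
        field_simp
      rw [h6, h5] at h4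
      linarith
    -- lower bound on f (x k)
    have hfk := hscf ⟨0, hm⟩ (x 0) (x k - x 0)
    rw [add_sub_cancel] at hfk
    have hip : -(G0 * ρ) ≤ ⟪f' ⟨0, hm⟩ (x 0), x k - x 0⟫ := by
      have := abs_real_inner_le_norm (f' ⟨0, hm⟩ (x 0)) (x k - x 0)
      have habs := abs_le.1 this
      rw [← hG0def, ← hρdef] at habs
      linarith [habs.1]
    -- combine with the level set bound
    have hlevk := hlev k ⟨0, hm⟩
    rw [hF ⟨0, hm⟩ (x k), hF ⟨0, hm⟩ (x 0)] at hlevk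
    have hgklow : g ⟨0, hm⟩ (x k) ≥ -2 * Mg * ρ + g ⟨0, hm⟩ (x 0) - Mg := by nlinarith
    have hfinal : 0 ≥ μ / 2 * ρ ^ 2 - (G0 + 2 * Mg + 1) * ρ := by nlinarith
    have hcon2 : 2 * (G0 + 2 * Mg + 1) / μ < ρ := lt_of_le_of_lt hRge hcon
    have hG0nn : 0 ≤ G0 := norm_nonneg _
    have h7 : 2 * (G0 + 2 * Mg + 1) < ρ * μ := by rwa [div_lt_iff₀ hμ] at hcon2
    nlinarith [mul_lt_mul_of_pos_right h7 hρ0]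
  have hBcomp : IsCompact (Metric.closedBall (x 0) R) := isCompact_closedBall _ _
  -- bound on the directions
  obtain ⟨D, hD1, hdbound⟩ : ∃ D : ℝ, 1 ≤ D ∧ ∀ k, ‖d k‖ ≤ D := by
    obtain ⟨G, hG⟩ := hBcomp.exists_bound_of_continuousOn (hf'_cont ⟨0, hm⟩).continuousOn
    obtain ⟨Mg2, hMg2⟩ := (isCompact_closedBall (x 0) (R + 1)).exists_bound_of_continuousOn
      (hg_cont ⟨0, hm⟩).continuousOn
    have hGnn : 0 ≤ G := le_trans (norm_nonneg _) (hG (x 0) (Metric.mem_closedBall_self (by linarith)))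
    have hMg2nn : 0 ≤ Mg2 :=
      le_trans (norm_nonneg _) (hMg2 (x 0) (Metric.mem_closedBall_self (by linarith)))
    refine ⟨max 1 (2 * (G + 2 * Mg2) / μ), le_max_left _ _, ?_⟩
    intro k
    rcases le_or_gt ‖d k‖ 1 with hd1 | hd1
    · exact hd1.trans (le_max_left _ _)
    set ρ : ℝ := ‖d k‖ with hρdef
    have hρ0 : 0 < ρ := by linarith
    have hinv1 : ρ⁻¹ ≤ 1 := by
      rw [inv_le_one_iff₀]; right; linarith
    -- bound coming from the model value
    have hcomp := h_le_φ (x k) (d k) ⟨0, hm⟩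
    have hθneg := θ_neg k
    have hθk : φ (x k) (d k) = θ k := rfl
    rw [hθk] at hcomp
    have hq := hsc ⟨0, hm⟩ (x k) (d k)
    have hip : -(G * ρ) ≤ ⟪f' ⟨0, hm⟩ (x k), d k⟫ := by
      have h1 := abs_real_inner_le_norm (f' ⟨0, hm⟩ (x k)) (d k)
      have h2 := (abs_le.1 h1).1
      have h3 : ‖f' ⟨0, hm⟩ (x k)‖ ≤ G := hG (x k) (hball k)
      have h4 : ‖f' ⟨0, hm⟩ (x k)‖ * ρ ≤ G * ρ := by
        apply mul_le_mul_of_nonneg_right h3 hρ0.le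
      rw [← hρdef] at h2
      linarith
    -- g part lower bound via convexity
    have hu : g ⟨0, hm⟩ (x k + ρ⁻¹ • d k) ≤
        (1 - ρ⁻¹) * g ⟨0, hm⟩ (x k) + ρ⁻¹ * g ⟨0, hm⟩ (x k + d k) := by
      have h2 := (hg ⟨0, hm⟩).2 (Set.mem_univ (x k)) (Set.mem_univ (x k + d k))
        (by linarith : (0:ℝ) ≤ 1 - ρ⁻¹) (by positivity : (0:ℝ) ≤ ρ⁻¹) (by ring)
      have hpt : (1 - ρ⁻¹) • (x k) + ρ⁻¹ • (x k + d k) = x k + ρ⁻¹ • d k := by module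
      rw [hpt, smul_eq_mul, smul_eq_mul] at h2
      exact h2
    have hmemk : x k ∈ Metric.closedBall (x 0) (R + 1) :=
      Metric.closedBall_subset_closedBall (by linarith) (hball k)
    have hmemu : x k + ρ⁻¹ • d k ∈ Metric.closedBall (x 0) (R + 1) := by
      rw [Metric.mem_closedBall]
      calc dist (x k + ρ⁻¹ • d k) (x 0) ≤ dist (x k + ρ⁻¹ • d k) (x k) + dist (x k) (x 0) :=
            dist_triangle _ _ _
        _ ≤ 1 + R := by
            gcongr
            · rw [dist_eq_norm]
              have heq : x k + ρ⁻¹ • d k - x k = ρ⁻¹ • d k := by abel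
              rw [heq, norm_smul, Real.norm_eq_abs, abs_of_pos (inv_pos.2 hρ0)]
              exact le_of_eq (inv_mul_cancel₀ hρ0.ne')
            · exact hball k
        _ = R + 1 := by ring
    have hbu : -Mg2 ≤ g ⟨0, hm⟩ (x k + ρ⁻¹ • d k) := by
      have := hMg2 _ hmemu
      rw [Real.norm_eq_abs] at this
      linarith [abs_le.1 this]
    have hbk : g ⟨0, hm⟩ (x k) ≤ Mg2 := by
      have := hMg2 _ hmemk
      rw [Real.norm_eq_abs] at this
      linarith [abs_le.1 this]
    have hgd : g ⟨0, hm⟩ (x k + d k) ≥ g ⟨0, hm⟩ (x k) - 2 * Mg2 * ρ := by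
      have h3 : g ⟨0, hm⟩ (x k + ρ⁻¹ • d k) - (1 - ρ⁻¹) * g ⟨0, hm⟩ (x k) ≤
          ρ⁻¹ * g ⟨0, hm⟩ (x k + d k) := by linarith
      have h4 := mul_le_mul_of_nonneg_left h3 hρ0.le
      have h5 : ρ * (ρ⁻¹ * g ⟨0, hm⟩ (x k + d k)) = g ⟨0, hm⟩ (x k + d k) := by field_simp
      have h6 : ρ * (g ⟨0, hm⟩ (x k + ρ⁻¹ • d k) - (1 - ρ⁻¹) * g ⟨0, hm⟩ (x k))
          = ρ * g ⟨0, hm⟩ (x k + ρ⁻¹ • d k) - (ρ - 1) * g ⟨0, hm⟩ (x k) := by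
        field_simp
      rw [h6, h5] at h4
      nlinarith
    -- combine
    have hfinal : μ / 2 * ρ ^ 2 ≤ (G + 2 * Mg2) * ρ := by nlinarith
    have hρle : ρ ≤ 2 * (G + 2 * Mg2) / μ := by
      rw [le_div_iff₀ hμ]
      nlinarith
    exact hρle.trans (le_max_right _ _)
  -- uniform Hessian bound
  obtain ⟨L, hLμ, hL⟩ : ∃ L : ℝ, μ ≤ L ∧ ∀ i, ∀ y ∈ Metric.closedBall (x 0) (R + D),
      ‖f'' i y‖ ≤ L := by
    have hex : ∀ i : Fin m, ∃ C, ∀ y ∈ Metric.closedBall (x 0) (R + D), ‖f'' i y‖ ≤ C :=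
      fun i => (isCompact_closedBall _ _).exists_bound_of_continuousOn (hcont i).continuousOn
    choose Lf hLf using hex
    refine ⟨max μ (Finset.univ.sup' hne Lf), le_max_left _ _, fun i y hy => ?_⟩
    exact (hLf i y hy).trans ((Finset.le_sup' Lf (Finset.mem_univ i)).trans (le_max_right _ _))
  have hLpos : 0 < L := lt_of_lt_of_le hμ hLμ
  -- step sizes bounded below
  set tmin : ℝ := min 1 (γ * ((1 - σ) * μ / (2 * L))) with htmindef
  have htminpos : 0 < tmin := by
    have h1σ : 0 < 1 - σ := by linarith
    have h2L : 0 < 2 * L := by linarith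
    exact lt_min one_pos (mul_pos hγ0 (div_pos (mul_pos h1σ hμ) h2L))
  have htmin : ∀ k, tmin ≤ t k := by
    intro k
    obtain ⟨j, htk, hok, hfail⟩ := ht k
    match j, htk, hok, hfail with
    | 0, htk, hok, hfail =>
      rw [htk, pow_zero]
      exact min_le_left _ _
    | (j' + 1), htk, hok, hfail =>
      have hf2 := hfail j' (Nat.lt_succ_self j')
      push_neg at hf2
      obtain ⟨i, hi⟩ := hf2
      set s : ℝ := γ ^ j' with hsdef
      have hs0 : 0 < s := pow_pos hγ0 _
      have hs1 : s ≤ 1 := pow_le_one₀ hγ0.le hγ1.le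
      have hdD := hdbound k
      have hdpos : 0 < ‖d k‖ := norm_pos_iff.2 (hdne k)
      have hsd : ‖s • d k‖ = s * ‖d k‖ := by
        rw [norm_smul, Real.norm_eq_abs, abs_of_pos hs0]
      have htay : f i (x k + s • d k) ≤ f i (x k) + ⟪f' i (x k), s • d k⟫
          + s ^ 2 * (L * ‖d k‖ ^ 2) / 2 := by
        apply npgmo_taylor_upper (hgrad i) (hhess i)
        intro τ hτ
        have hmem : x k + τ • s • d k ∈ Metric.closedBall (x 0) (R + D) := by
          rw [Metric.mem_closedBall]
          calc dist (x k + τ • s • d k) (x 0)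
              ≤ dist (x k + τ • s • d k) (x k) + dist (x k) (x 0) := dist_triangle _ _ _
            _ ≤ D + R := by
                gcongr
                · rw [dist_eq_norm]
                  have heq : x k + τ • s • d k - x k = τ • s • d k := by abel
                  rw [heq, norm_smul, hsd, Real.norm_eq_abs, abs_of_nonneg hτ.1]
                  have hstep1 : τ * (s * ‖d k‖) ≤ 1 * (1 * D) :=
                    mul_le_mul hτ.2 (mul_le_mul hs1 hdD (norm_nonneg _) zero_le_one)
                      (mul_nonneg hs0.le (norm_nonneg _)) zero_le_one
                  linarith
                · exact hball k
            _ = R + D := by ring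
        have hopn : ‖f'' i (x k + τ • s • d k)‖ ≤ L := hL i _ hmem
        have h1 := real_inner_le_norm (f'' i (x k + τ • s • d k) (s • d k)) (s • d k)
        have h2 := ContinuousLinearMap.le_opNorm (f'' i (x k + τ • s • d k)) (s • d k)
        have h3 : (0:ℝ) ≤ ‖s • d k‖ := norm_nonneg _
        calc ⟪f'' i (x k + τ • s • d k) (s • d k), s • d k⟫
            ≤ ‖f'' i (x k + τ • s • d k) (s • d k)‖ * ‖s • d k‖ := h1
          _ ≤ (‖f'' i (x k + τ • s • d k)‖ * ‖s • d k‖) * ‖s • d k‖ :=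
              mul_le_mul_of_nonneg_right h2 h3
          _ ≤ (L * ‖s • d k‖) * ‖s • d k‖ :=
              mul_le_mul_of_nonneg_right (mul_le_mul_of_nonneg_right hopn h3) h3
          _ = s ^ 2 * (L * ‖d k‖ ^ 2) := by rw [hsd]; ring
      have hgcv : g i (x k + s • d k) ≤ (1 - s) * g i (x k) + s * g i (x k + d k) := by
        have h2 := (hg i).2 (Set.mem_univ (x k)) (Set.mem_univ (x k + d k))
          (by linarith : (0:ℝ) ≤ 1 - s) hs0.le (by ring)
        have hpt : (1 - s) • x k + s • (x k + d k) = x k + s • d k := by module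
        rw [hpt, smul_eq_mul, smul_eq_mul] at h2
        exact h2
      have hcomp := h_le_φ (x k) (d k) i
      have hθk : φ (x k) (d k) = θ k := rfl
      rw [hθk] at hcomp hi
      have hq := hsc i (x k) (d k)
      have hinnersmul : ⟪f' i (x k), s • d k⟫ = s * ⟪f' i (x k), d k⟫ :=
        real_inner_smul_right _ _ _
      rw [hF i (x k + s • d k), hF i (x k)] at hi
      rw [hinnersmul] at htay
      have hθle := θ_le k
      have hs_ge : (1 - σ) * μ / (2 * L) ≤ s := by
        by_contra hcon
        push_neg at hcon
        have h2L : (0:ℝ) < 2 * L := by linarith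
        have hsL : s * (2 * L) < (1 - σ) * μ := by
          have := (lt_div_iff₀ h2L).1 hcon
          linarith
        have hsmulcomp := mul_le_mul_of_nonneg_left hcomp hs0.le
        have hqs := mul_le_mul_of_nonneg_left hq hs0.le
        have h8 := mul_le_mul_of_nonneg_left
          (mul_le_mul_of_nonneg_left hθle hs0.le) (by linarith : (0:ℝ) ≤ 1 - σ)
        have h9 := mul_lt_mul_of_pos_right hsL
          (by positivity : (0:ℝ) < s * ‖d k‖ ^ 2 / 2)
        nlinarith [mul_pos (mul_pos hμ hs0) (mul_pos hdpos hdpos)]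
      calc tmin ≤ γ * ((1 - σ) * μ / (2 * L)) := min_le_right _ _
        _ ≤ γ * s := mul_le_mul_of_nonneg_left hs_ge hγ0.le
        _ = t k := by rw [htk, pow_succ]; ring
  -- θ tends to zero
  have hθ0 : Tendsto θ atTop (𝓝 0) := by
    obtain ⟨CB, hCB⟩ := hBcomp.exists_bound_of_continuousOn (hF_cont ⟨0, hm⟩).continuousOn
    set a : ℕ → ℝ := fun k => F ⟨0, hm⟩ (x k) - F ⟨0, hm⟩ (x (k + 1)) with hadef
    have ha_nonneg : ∀ k, 0 ≤ a k := fun k => sub_nonneg.2 (hdec k ⟨0, hm⟩)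
    have ha_sum : ∀ N, ∑ k ∈ Finset.range N, a k ≤ F ⟨0, hm⟩ (x 0) + CB := by
      intro N
      rw [Finset.sum_range_sub' (fun k => F ⟨0, hm⟩ (x k)) N]
      have h1 := hCB (x N) (hball N)
      rw [Real.norm_eq_abs] at h1
      linarith [(abs_le.1 h1).1]
    have ha_summable : Summable a := summable_of_sum_range_le ha_nonneg ha_sum
    have ha0 : Tendsto a atTop (𝓝 0) := ha_summable.tendsto_atTop_zero
    have hbound : ∀ k, tmin * σ * (-θ k) ≤ a k := by
      intro k
      have h1 := hstep k ⟨0, hm⟩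
      have h2 : tmin * σ * (-θ k) ≤ t k * σ * (-θ k) := by
        apply mul_le_mul_of_nonneg_right
        · exact mul_le_mul_of_nonneg_right (htmin k) hσ0.le
        · linarith [θ_neg k]
      have h3 : t k * σ * (-θ k) = -(t k * (σ * θ k)) := by ring
      rw [h3] at h2
      simp only [hadef]
      linarith
    have hnθ : Tendsto (fun k => -θ k) atTop (𝓝 0) := by
      have hpos : 0 < tmin * σ := mul_pos htminpos hσ0
      have hg0 : Tendsto (fun k => (tmin * σ)⁻¹ * a k) atTop (𝓝 0) := by
        simpa using ha0.const_mul (tmin * σ)⁻¹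
      refine squeeze_zero (fun k => by linarith [θ_neg k]) (fun k => ?_) hg0
      have h1 := hbound k
      calc -θ k = (tmin * σ)⁻¹ * (tmin * σ * (-θ k)) := by field_simp
        _ ≤ (tmin * σ)⁻¹ * a k := mul_le_mul_of_nonneg_left h1 (inv_pos.2 hpos).le
    have := hnθ.neg
    simpa using this
  -- accumulation point
  obtain ⟨xs, hxsB, ι, hι, hxι⟩ := hBcomp.tendsto_subseq hball
  -- criticality of xs
  have crit : ∀ e : EuclideanSpace ℝ (Fin n), 0 ≤ φ xs e := by
    intro e
    by_contra hneg
    push_neg at hneg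
    set ε : ℝ := -φ xs e with hεdef
    have hε : 0 < ε := by rw [hεdef]; linarith
    have hterm : ∀ i : Fin m, Tendsto
        (fun jj => ⟪f' i (x (ι jj)), e⟫ + g i (x (ι jj) + e) - g i (x (ι jj))
          + (1/2) * ⟪e, f'' i (x (ι jj)) e⟫) atTop
        (𝓝 (⟪f' i xs, e⟫ + g i (xs + e) - g i xs + (1/2) * ⟪e, f'' i xs e⟫)) := by
      intro i
      have hc : Continuous fun y : EuclideanSpace ℝ (Fin n) =>
          ⟪f' i y, e⟫ + g i (y + e) - g i y + (1/2) * ⟪e, f'' i y e⟫ := by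
        refine Continuous.add (Continuous.sub (Continuous.add ?_ ?_) ?_) ?_
        · exact (hf'_cont i).inner continuous_const
        · exact (hg_cont i).comp (continuous_id.add continuous_const)
        · exact hg_cont i
        · exact continuous_const.mul
            (continuous_const.inner ((hcont i).clm_apply continuous_const))
      exact (hc.tendsto xs).comp hxι
    have hev1 : ∀ᶠ jj in atTop, ∀ i : Fin m,
        ⟪f' i (x (ι jj)), e⟫ + g i (x (ι jj) + e) - g i (x (ι jj))
          + (1/2) * ⟪e, f'' i (x (ι jj)) e⟫ <
        (⟪f' i xs, e⟫ + g i (xs + e) - g i xs + (1/2) * ⟪e, f'' i xs e⟫) + ε/2 := by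
      rw [eventually_all]
      intro i
      exact (hterm i).eventually_lt_const (lt_add_of_pos_right _ (by linarith))
    have hθι : Tendsto (fun jj => θ (ι jj)) atTop (𝓝 0) := hθ0.comp hι.tendsto_atTop
    have hev2 : ∀ᶠ jj in atTop, -(ε/2) < θ (ι jj) :=
      hθι.eventually_const_lt (by linarith)
    obtain ⟨jj, h1, h2⟩ := (hev1.and hev2).exists
    have h3 : φ (x (ι jj)) e ≤ φ xs e + ε/2 := by
      apply φ_le
      intro i
      have h4 := h_le_φ xs e i
      linarith [h1 i]
    have h5 := hdk (ι jj) e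
    have hθjj : φ (x (ι jj)) (d (ι jj)) = θ (ι jj) := rfl
    rw [hθjj] at h5
    rw [hεdef] at h2
    linarith
  -- quadratic growth
  have hgrow : ∀ w : EuclideanSpace ℝ (Fin n), μ / 2 * ‖w - xs‖ ^ 2 ≤ Finset.univ.sup' hne fun i => F i w - F i xs := by
    intro w
    set e : EuclideanSpace ℝ (Fin n) := w - xs with hedef
    have hwe : xs + e = w := by rw [hedef]; abel
    set ψ : ℝ := Finset.univ.sup' hne (fun i => F i w - F i xs) with hψdef
    set C : ℝ := L * ‖e‖ ^ 2 with hCdef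
    have hxsmem : xs ∈ Metric.closedBall (x 0) (R + D) :=
      Metric.closedBall_subset_closedBall (by linarith) hxsB
    have hC0 : 0 ≤ C := by rw [hCdef]; positivity
    have hkey : ∀ tt : ℝ, 0 < tt → tt ≤ 1 →
        0 ≤ tt * (ψ - μ/2 * ‖e‖ ^ 2) + tt ^ 2 * C / 2 := by
      intro tt h0 h1t
      have hφt := crit (tt • e)
      have hup : φ xs (tt • e) ≤ tt * (ψ - μ/2 * ‖e‖ ^ 2) + tt ^ 2 * C / 2 := by
        apply φ_le
        intro i
        have hinner : ⟪f' i xs, tt • e⟫ = tt * ⟪f' i xs, e⟫ := real_inner_smul_right _ _ _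
        have hquad : ⟪tt • e, f'' i xs (tt • e)⟫ = tt ^ 2 * ⟪e, f'' i xs e⟫ := by
          rw [_root_.map_smul, real_inner_smul_left, real_inner_smul_right]
          ring
        have hgc : g i (xs + tt • e) ≤ (1 - tt) * g i xs + tt * g i w := by
          have h2 := (hg i).2 (Set.mem_univ xs) (Set.mem_univ w)
            (by linarith : (0:ℝ) ≤ 1 - tt) h0.le (by ring)
          have hpt : (1 - tt) • xs + tt • w = xs + tt • e := by rw [hedef]; module
          rw [hpt, smul_eq_mul, smul_eq_mul] at h2
          exact h2
        have hfe := hscf i xs e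
        rw [hwe] at hfe
        have hqc : ⟪e, f'' i xs e⟫ ≤ L * ‖e‖ ^ 2 := by
          have ha := real_inner_le_norm e (f'' i xs e)
          have hb := ContinuousLinearMap.le_opNorm (f'' i xs) e
          have hc2 : ‖f'' i xs‖ ≤ L := hL i xs hxsmem
          nlinarith [norm_nonneg e, norm_nonneg (f'' i xs e), norm_nonneg (f'' i xs)]
        have hFle : F i w - F i xs ≤ ψ := by
          rw [hψdef]
          exact Finset.le_sup' (fun i => F i w - F i xs) (Finset.mem_univ i)
        rw [hF i w, hF i xs] at hFle
        rw [hinner, hquad]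
        have h5 := mul_le_mul_of_nonneg_left
          (show ⟪f' i xs, e⟫ ≤ f i w - f i xs - μ * ‖e‖ ^ 2 / 2 by linarith) h0.le
        have h6 := mul_le_mul_of_nonneg_left hqc (by positivity : (0:ℝ) ≤ tt ^ 2)
        rw [← hCdef] at h6
        have h7 := mul_le_mul_of_nonneg_left hFle h0.le
        linarith
      linarith
    by_contra hlt
    push_neg at hlt
    set A : ℝ := μ / 2 * ‖e‖ ^ 2 - ψ with hAdef
    have hA : 0 < A := by rw [hAdef]; linarith
    set tt : ℝ := min 1 (A / (C + 1)) with httdef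
    have htt0 : 0 < tt := lt_min one_pos (div_pos hA (by linarith))
    have htt1 : tt ≤ 1 := min_le_left _ _
    have h := hkey tt htt0 htt1
    have h2 : tt * A ≤ tt * (tt * C / 2) := by nlinarith
    have h3 : A ≤ tt * C / 2 := (mul_le_mul_iff_right₀ htt0).1 h2
    have h4 : tt ≤ A / (C + 1) := min_le_right _ _
    have h5 : tt * C ≤ A / (C + 1) * C := mul_le_mul_of_nonneg_right h4 hC0
    have h6 : A / (C + 1) * C ≤ A := by
      rw [div_mul_eq_mul_div, div_le_iff₀ (by linarith : (0:ℝ) < C + 1)]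
      nlinarith
    linarith
  have hxlim : Tendsto x atTop (𝓝 xs) := by
    rw [Metric.tendsto_atTop]
    intro ε hε
    have hε' : 0 < μ / 2 * (ε ^ 2 / 2) := by positivity
    have hev : ∀ᶠ jj in atTop, ∀ i, F i (x (ι jj)) < F i xs + μ / 2 * (ε ^ 2 / 2) := by
      rw [eventually_all]
      intro i
      exact (((hF_cont i).tendsto xs).comp hxι).eventually_lt_const
        (lt_add_of_pos_right _ hε')
    obtain ⟨J, hJ⟩ := hev.exists
    refine ⟨ι J, fun k hk => ?_⟩
    have hψ : (Finset.univ.sup' hne fun i => F i (x k) - F i xs) ≤ μ / 2 * (ε ^ 2 / 2) := by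
      apply Finset.sup'_le
      intro i _
      have h1 := hmono i (ι J) k hk
      linarith [hJ i]
    have h2 := (hgrow (x k)).trans hψ
    have h3 : ‖x k - xs‖ ^ 2 < ε ^ 2 := by nlinarith
    rw [dist_eq_norm]
    nlinarith [norm_nonneg (x k - xs)]
  refine ⟨xs, hxlim, ?_⟩
  rintro ⟨z, hz1, j, hz2⟩
  have hzne : z - xs ≠ 0 := by
    intro hzz
    rw [sub_eq_zero] at hzz
    subst hzz
    exact lt_irrefl _ hz2
  have h1 := hgrow z
  have h2 : (Finset.univ.sup' hne fun i => F i z - F i xs) ≤ 0 :=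
    Finset.sup'_le _ _ fun i _ => sub_nonpos.2 (hz1 i)
  have h3 : 0 < ‖z - xs‖ := norm_pos_iff.2 hzne
  nlinarith [mul_pos hμ (mul_pos h3 h3)]
end
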